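/- arXiv:2505.09765 — 11 statements merged into one kernel-verified Lean document; each statement's English description precedes it below -/
import Mathlib

section
/- Assume: (i) the primal problem min_{u∈V} F(u)+G(Bu) admits a solution u* (unique by strong convexity of F); (ii) the Fenchel–Rockafellar condition holds, so the dual problem min_{p∈W} F*(−Bᵗp)+G*(p) admits a solution p*; (iii) F : V → ℝ is μ-strongly convex for some μ > 0. If the sequence {u^{(n)}} ⊂ V is a dualization of the sequence {p^{(n)}} ⊂ W, i.e., −Bᵗp^{(n)} ∈ ∂F(u^{(n)}) for all n ≥ 1, then ‖u^{(n)} − u*‖ ≤ (‖B‖/μ)‖p^{(n)} − p*‖ for all n ≥ 1, where ‖B‖ is the operator norm of B. In particular, p^{(n)} → p* implies u^{(n)} → u*. -/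
/-!
The Fenchel–Rockafellar multiplier `x` bounds `F v + G w` from below by
`F u* + G (B u*) + ⟪x, w - B v⟫`; this makes `G (B u*)` finite and gives
`F*(-Bᵗx) + G*(x) ≤ -(F u* + G (B u*))`. By optimality `p*` satisfies the same bound, and
Fenchel–Young `G*(p*) ≥ ⟪p*, B u*⟫ - G (B u*)` then leaves
`F*(-Bᵗp*) ≤ ⟪-Bᵗp*, u*⟫ - F u*`, i.e. `-Bᵗp* ∈ ∂F(u*)`.
Strong convexity makes `∂F` strongly monotone, so with `-Bᵗpₙ ∈ ∂F(uₙ)`,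
`μ ‖uₙ - u*‖² ≤ ⟪p* - pₙ, B (uₙ - u*)⟫ ≤ ‖B‖ ‖pₙ - p*‖ ‖uₙ - u*‖`.
-/
open scoped RealInnerProductSpace
open Filter Topology

noncomputable section

/-- The Legendre–Fenchel conjugate of an extended-real-valued function. -/
def fenchelConj {E : Type*} [NormedAddCommGroup E] [InnerProductSpace ℝ E]
    (F : E → EReal) (x : E) : EReal :=
  ⨆ u : E, (((⟪x, u⟫ : ℝ) : EReal) - F u)

/-- The Legendre–Fenchel conjugate of a real-valued function. -/
def fenchelConjR {E : Type*} [NormedAddCommGroup E] [InnerProductSpace ℝ E]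
    (F : E → ℝ) (x : E) : EReal :=
  ⨆ u : E, ((⟪x, u⟫ - F u : ℝ) : EReal)

/-- The subdifferential of a real-valued function. -/
def subdiffR {E : Type*} [NormedAddCommGroup E] [InnerProductSpace ℝ E]
    (F : E → ℝ) (u : E) : Set E :=
  {x | ∀ v : E, F u + ⟪x, v - u⟫ ≤ F v}

/-- Properness of an extended-real-valued function. -/
def ProperFn {E : Type*} (F : E → EReal) : Prop :=
  (∃ u, F u ≠ ⊤) ∧ ∀ u, F u ≠ ⊥

/-- Convexity of an extended-real-valued function. -/
def ConvexFn {E : Type*} [AddCommGroup E] [Module ℝ E] (F : E → EReal) : Prop :=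
  ∀ u v : E, ∀ t : ℝ, 0 ≤ t → t ≤ 1 →
    F ((1 - t) • u + t • v) ≤ ((1 - t : ℝ) : EReal) * F u + ((t : ℝ) : EReal) * F v

namespace EReal

lemma iSup_add_iSup_le {ι κ : Sort*} {f : ι → EReal} {g : κ → EReal} {a : EReal}
    (h : ∀ i j, f i + g j ≤ a) : iSup f + iSup g ≤ a := by
  refine add_le_of_forall_lt fun b hb c hc => ?_
  obtain ⟨i, hi⟩ := lt_iSup_iff.1 hb
  obtain ⟨j, hj⟩ := lt_iSup_iff.1 hc
  exact (add_le_add hi.le hj.le).trans (h i j)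

lemma le_coe_of_add_le {a b : EReal} {r s : ℝ} (hb : (s : EReal) ≤ b)
    (h : a + b ≤ ((r + s : ℝ) : EReal)) : a ≤ r := by
  have hs : a + s ≤ ((r + s : ℝ) : EReal) := (add_le_add_right hb a).trans h
  rwa [← EReal.le_sub_iff_add_le (.inl (EReal.coe_ne_bot s)) (.inl (EReal.coe_ne_top s)),
    ← EReal.coe_sub, _root_.add_sub_cancel_right] at hs

end EReal

section Conjugate

variable {E : Type*} [NormedAddCommGroup E] [InnerProductSpace ℝ E]

lemma coe_inner_sub_le_fenchelConjR (F : E → ℝ) (x u : E) :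
    ((⟪x, u⟫ - F u : ℝ) : EReal) ≤ fenchelConjR F x :=
  le_iSup (fun u => ((⟪x, u⟫ - F u : ℝ) : EReal)) u

lemma coe_inner_sub_le_fenchelConj (G : E → EReal) (x w : E) :
    ((⟪x, w⟫ : ℝ) : EReal) - G w ≤ fenchelConj G x :=
  le_iSup (fun w => ((⟪x, w⟫ : ℝ) : EReal) - G w) w

lemma mem_subdiffR_of_fenchelConjR_le {F : E → ℝ} {x u : E}
    (h : fenchelConjR F x ≤ ((⟪x, u⟫ - F u : ℝ) : EReal)) : x ∈ subdiffR F u := by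
  intro v
  have hv := EReal.coe_le_coe_iff.1 ((coe_inner_sub_le_fenchelConjR F x v).trans h)
  rw [inner_sub_right]
  linarith

lemma mul_sq_norm_sub_le_inner_of_mem_subdiffR {F : E → ℝ} {μ : ℝ}
    (hFsc : ∀ u v x : E, x ∈ subdiffR F v → F v + ⟪x, u - v⟫ + μ / 2 * ‖u - v‖ ^ 2 ≤ F u)
    {u v x y : E} (hx : x ∈ subdiffR F u) (hy : y ∈ subdiffR F v) :
    μ * ‖u - v‖ ^ 2 ≤ ⟪x - y, u - v⟫ := by
  have hu := hFsc v u x hx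
  have hv := hFsc u v y hy
  rw [norm_sub_rev, ← neg_sub u v, inner_neg_right] at hu
  rw [inner_sub_left]
  linarith

end Conjugate

section Duality

variable {V W : Type*} [NormedAddCommGroup V] [InnerProductSpace ℝ V]
  [NormedAddCommGroup W] [InnerProductSpace ℝ W]

def primalObjective (F : V → ℝ) (G : W → EReal) (B : V → W) (u : V) : EReal :=
  ((F u : ℝ) : EReal) + G (B u)

def dualObjective (F : V → ℝ) (G : W → EReal) (Bt : W → V) (p : W) : EReal :=
  fenchelConjR F (-(Bt p)) + fenchelConj G p

variable {F : V → ℝ} {G : W → EReal} {B : V →L[ℝ] W} {Bt : W →L[ℝ] V}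

lemma primalObjective_add_inner_le {ustar : V}
    (hprimal : ∀ u, primalObjective F G B ustar ≤ primalObjective F G B u) {x : W}
    (hx : ∀ q : W, (⨅ u : V, primalObjective F G B u) + ((⟪x, q - 0⟫ : ℝ) : EReal) ≤
      ⨅ u : V, (((F u : ℝ) : EReal) + G (B u + q)))
    (v : V) (w : W) :
    primalObjective F G B ustar + ((⟪x, w - B v⟫ : ℝ) : EReal) ≤ ((F v : ℝ) : EReal) + G w := by
  have hmin : (⨅ u : V, primalObjective F G B u) = primalObjective F G B ustar :=
    le_antisymm (iInf_le _ ustar) (le_iInf hprimal)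
  have h := (hx (w - B v)).trans (iInf_le _ v)
  rwa [hmin, sub_zero, add_sub_cancel] at h

lemma exists_coe_eq_of_primalObjective_add_inner_le (hG : ProperFn G) {ustar : V} {x : W}
    (h : ∀ v w, primalObjective F G B ustar + ((⟪x, w - B v⟫ : ℝ) : EReal) ≤
      ((F v : ℝ) : EReal) + G w) :
    ∃ g : ℝ, G (B ustar) = g := by
  obtain ⟨w₀, hw₀⟩ := hG.1
  have hfin : G (B ustar) ≠ ⊤ := by
    intro htop
    have h₀ := h ustar w₀
    rw [primalObjective, htop, EReal.coe_add_top, EReal.top_add_coe, top_le_iff] at h₀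
    exact (EReal.add_lt_top (EReal.coe_ne_top _) hw₀).ne h₀
  exact ⟨_, (EReal.coe_toReal hfin (hG.2 _)).symm⟩

lemma dualObjective_le_of_forall (hadj : ∀ (v : V) (w : W), ⟪B v, w⟫ = ⟪v, Bt w⟫)
    {x : W} {r : ℝ}
    (h : ∀ v w, (r : EReal) + ((⟪x, w - B v⟫ : ℝ) : EReal) ≤ ((F v : ℝ) : EReal) + G w) :
    dualObjective F G Bt x ≤ ((-r : ℝ) : EReal) := by
  refine EReal.iSup_add_iSup_le fun v w => ?_
  have hvw := h v w
  rw [inner_sub_right, real_inner_comm (B v), hadj] at hvw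
  generalize G w = y at hvw ⊢
  induction y using EReal.rec with
  | bot =>
    rw [EReal.add_bot, le_bot_iff, ← EReal.coe_add] at hvw
    exact absurd hvw (EReal.coe_ne_bot _)
  | top => simp
  | coe g =>
    norm_cast at hvw ⊢
    rw [inner_neg_left, real_inner_comm v]
    linarith

lemma neg_adjoint_mem_subdiffR_of_dualObjective_le
    (hadj : ∀ (v : V) (w : W), ⟪B v, w⟫ = ⟪v, Bt w⟫)
    {u : V} {g : ℝ} (hg : G (B u) = g) {p : W}
    (h : dualObjective F G Bt p ≤ ((-(F u + g) : ℝ) : EReal)) : -(Bt p) ∈ subdiffR F u := by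
  have hG := coe_inner_sub_le_fenchelConj G p (B u)
  rw [hg, ← EReal.coe_sub] at hG
  refine mem_subdiffR_of_fenchelConjR_le (EReal.le_coe_of_add_le hG (h.trans_eq ?_))
  rw [real_inner_comm (B u) p, hadj, inner_neg_left, real_inner_comm u,
    EReal.coe_eq_coe_iff]
  ring

lemma norm_sub_le_of_neg_adjoint_mem_subdiffR {μ : ℝ} (hμ : 0 < μ)
    (hadj : ∀ (v : V) (w : W), ⟪B v, w⟫ = ⟪v, Bt w⟫)
    (hFsc : ∀ u v x : V, x ∈ subdiffR F v → F v + ⟪x, u - v⟫ + μ / 2 * ‖u - v‖ ^ 2 ≤ F u)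
    {u v : V} {p q : W} (hp : -(Bt p) ∈ subdiffR F u) (hq : -(Bt q) ∈ subdiffR F v) :
    ‖u - v‖ ≤ ‖B‖ / μ * ‖p - q‖ := by
  have hquad : μ * ‖u - v‖ ^ 2 ≤ ‖B‖ * ‖p - q‖ * ‖u - v‖ :=
    calc μ * ‖u - v‖ ^ 2 ≤ ⟪-(Bt p) - -(Bt q), u - v⟫ :=
          mul_sq_norm_sub_le_inner_of_mem_subdiffR hFsc hp hq
      _ = ⟪q - p, B (u - v)⟫ := by
          rw [neg_sub_neg, ← map_sub, real_inner_comm (B _), hadj, real_inner_comm]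
      _ ≤ ‖q - p‖ * (‖B‖ * ‖u - v‖) :=
          (real_inner_le_norm _ _).trans (by gcongr; exact B.le_opNorm _)
      _ = ‖B‖ * ‖p - q‖ * ‖u - v‖ := by rw [norm_sub_rev]; ring
  rcases (norm_nonneg (u - v)).eq_or_lt with h0 | hpos
  · rw [← h0]
    positivity
  · rw [div_mul_eq_mul_div, le_div_iff₀ hμ]
    nlinarith

end Duality

theorem dualization_convergence_general
    {V W : Type*}
    [NormedAddCommGroup V] [InnerProductSpace ℝ V]
    [NormedAddCommGroup W] [InnerProductSpace ℝ W]
    (F : V → ℝ) (G : W → EReal) (B : V →L[ℝ] W) (Bt : W →L[ℝ] V)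
    (hadj : ∀ (v : V) (w : W), ⟪B v, w⟫ = ⟪v, Bt w⟫)
    (hGproper : ProperFn G)
    -- (iii) `F` is `μ`-strongly convex
    (μ : ℝ) (hμ : 0 < μ)
    (hFsc : ∀ u v x : V, x ∈ subdiffR F v →
      F v + ⟪x, u - v⟫ + μ / 2 * ‖u - v‖ ^ 2 ≤ F u)
    -- (i) the primal problem admits a solution `u*`
    (ustar : V)
    (hprimal : ∀ u : V, ((F ustar : ℝ) : EReal) + G (B ustar) ≤ ((F u : ℝ) : EReal) + G (B u))
    -- (ii) the Fenchel–Rockafellar condition: the value function `H` is subdifferentiable at 0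
    (hFR : ∃ x : W, ∀ q : W,
      (⨅ u : V, (((F u : ℝ) : EReal) + G (B u))) + ((⟪x, q - 0⟫ : ℝ) : EReal) ≤
        ⨅ u : V, (((F u : ℝ) : EReal) + G (B u + q)))
    -- `p*` is a solution of the dual problem
    (pstar : W)
    (hdual : ∀ p : W,
      fenchelConjR F (-(Bt pstar)) + fenchelConj G pstar ≤
        fenchelConjR F (-(Bt p)) + fenchelConj G p)
    -- `{u⁽ⁿ⁾}` is a dualization of `{p⁽ⁿ⁾}`
    (u : ℕ → V) (p : ℕ → W)
    (hdualization : ∀ n : ℕ, 1 ≤ n → -(Bt (p n)) ∈ subdiffR F (u n)) :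
    (∀ n : ℕ, 1 ≤ n → ‖u n - ustar‖ ≤ ‖B‖ / μ * ‖p n - pstar‖) ∧
      (Tendsto p atTop (𝓝 pstar) → Tendsto u atTop (𝓝 ustar)) := by
  obtain ⟨x, hx⟩ := hFR
  have hbound := primalObjective_add_inner_le hprimal hx
  obtain ⟨g, hg⟩ := exists_coe_eq_of_primalObjective_add_inner_le hGproper hbound
  have hxbound : dualObjective F G Bt x ≤ ((-(F ustar + g) : ℝ) : EReal) :=
    dualObjective_le_of_forall hadj fun v w => by
      simpa only [primalObjective, hg, EReal.coe_add] using hbound v w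
  have hstar : -(Bt pstar) ∈ subdiffR F ustar :=
    neg_adjoint_mem_subdiffR_of_dualObjective_le hadj hg ((hdual x).trans hxbound)
  have hest : ∀ n, 1 ≤ n → ‖u n - ustar‖ ≤ ‖B‖ / μ * ‖p n - pstar‖ := fun n hn =>
    norm_sub_le_of_neg_adjoint_mem_subdiffR hμ hadj hFsc (hdualization n hn) hstar
  refine ⟨hest, fun hp => ?_⟩
  rw [tendsto_iff_norm_sub_tendsto_zero] at hp ⊢
  refine squeeze_zero' (.of_forall fun n => norm_nonneg _) ((eventually_ge_atTop 1).mono hest) ?_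
  simpa using hp.const_mul (‖B‖ / μ)

/-- Theorem 2.3. If `F` is `μ`-strongly convex, the primal problem admits a
solution `u*`, the Fenchel–Rockafellar condition holds and the dual problem admits a solution
`p*`, and `{u⁽ⁿ⁾}` is a dualization of `{p⁽ⁿ⁾}` (i.e. `−Bᵗp⁽ⁿ⁾ ∈ ∂F(u⁽ⁿ⁾)` for `n ≥ 1`),
then `‖u⁽ⁿ⁾ − u*‖ ≤ (‖B‖/μ)‖p⁽ⁿ⁾ − p*‖` for all `n ≥ 1`; in particular convergence of the
dual iterates implies convergence of the primal iterates. -/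
theorem dualization_convergence
    {V W : Type*}
    [NormedAddCommGroup V] [InnerProductSpace ℝ V] [FiniteDimensional ℝ V]
    [NormedAddCommGroup W] [InnerProductSpace ℝ W] [FiniteDimensional ℝ W]
    (F : V → ℝ) (G : W → EReal) (B : V →L[ℝ] W) (Bt : W →L[ℝ] V)
    (hadj : ∀ (v : V) (w : W), ⟪B v, w⟫ = ⟪v, Bt w⟫)
    (hFconvex : ConvexOn ℝ Set.univ F)
    (hGproper : ProperFn G) (hGconvex : ConvexFn G) (hGlsc : LowerSemicontinuous G)
    -- (iii) `F` is `μ`-strongly convex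
    (μ : ℝ) (hμ : 0 < μ)
    (hFsc : ∀ u v x : V, x ∈ subdiffR F v →
      F v + ⟪x, u - v⟫ + μ / 2 * ‖u - v‖ ^ 2 ≤ F u)
    -- (i) the primal problem admits a solution `u*`
    (ustar : V)
    (hprimal : ∀ u : V, ((F ustar : ℝ) : EReal) + G (B ustar) ≤ ((F u : ℝ) : EReal) + G (B u))
    -- (ii) the Fenchel–Rockafellar condition: the value function `H` is subdifferentiable at 0
    (hFR : ∃ x : W, ∀ q : W,
      (⨅ u : V, (((F u : ℝ) : EReal) + G (B u))) + ((⟪x, q - 0⟫ : ℝ) : EReal) ≤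
        ⨅ u : V, (((F u : ℝ) : EReal) + G (B u + q)))
    -- `p*` is a solution of the dual problem
    (pstar : W)
    (hdual : ∀ p : W,
      fenchelConjR F (-(Bt pstar)) + fenchelConj G pstar ≤
        fenchelConjR F (-(Bt p)) + fenchelConj G p)
    -- `{u⁽ⁿ⁾}` is a dualization of `{p⁽ⁿ⁾}`
    (u : ℕ → V) (p : ℕ → W)
    (hdualization : ∀ n : ℕ, 1 ≤ n → -(Bt (p n)) ∈ subdiffR F (u n)) :
    (∀ n : ℕ, 1 ≤ n → ‖u n - ustar‖ ≤ ‖B‖ / μ * ‖p n - pstar‖) ∧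
      (Tendsto p atTop (𝓝 pstar) → Tendsto u atTop (𝓝 ustar)) :=
  dualization_convergence_general F G B Bt hadj hGproper μ hμ hFsc ustar hprimal hFR pstar hdual u p
    hdualization
end
end

section
/- Under the compatibility assumption E_j(w_j; u₁ + ⋯ + u_J) = Ẽ_j(u_j + w_j; (u₁, …, u_J)) for all w_j ∈ V_j and (u₁, …, u_J) ∈ Ṽ, the parallel subspace correction method is equivalent to the relaxed block Jacobi method: if the initial iterates satisfy u^{(0)} = Σ_{j=1}^J u_j^{(0)}, then u^{(n)} = Σ_{j=1}^J u_j^{(n)} for all n ≥ 1. -/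
/-!
Compatibility says that, on `Vⱼ`, the PSC energy `E_j(·; Σᵢ ũᵢ)` is the block Jacobi energy
`Ẽ_j(·; ũ)` shifted by `ũⱼ`. Hence if `wⱼ` minimizes the former, `ũⱼ + wⱼ` minimizes the latter,
and by uniqueness it is the block Jacobi update `ûⱼ`. The relaxed update then reads
`ũⱼ ↦ ũⱼ + τ wⱼ`, and summing over `j` gives exactly the PSC update.
-/

open Finset

theorem IsMinOn.add_left_of_eqOn {G β : Type*} [AddGroup G] [Preorder β] {S : AddSubgroup G}
    {f g : G → β} {a x : G} (ha : a ∈ S) (hfg : Set.EqOn f (fun w => g (a + w)) S)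
    (hxS : x ∈ S) (hx : IsMinOn f S x) : IsMinOn g S (a + x) := by
  intro y hy
  have hy' : -a + y ∈ S := S.add_mem (S.neg_mem ha) hy
  calc g (a + x) = f x := (hfg hxS).symm
    _ ≤ f (-a + y) := hx hy'
    _ = g y := by rw [hfg hy']; exact congrArg g (add_neg_cancel_left a y)

theorem eq_add_of_isMinOn_of_existsUnique {G β : Type*} [AddGroup G] [Preorder β]
    {S : AddSubgroup G} {f g : G → β} {a x xhat : G} (ha : a ∈ S)
    (hfg : Set.EqOn f (fun w => g (a + w)) S)
    (hg : ∃! y, y ∈ S ∧ IsMinOn g S y)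
    (hx : x ∈ S ∧ IsMinOn f S x) (hxhat : xhat ∈ S ∧ IsMinOn g S xhat) :
    xhat = a + x :=
  hg.unique hxhat ⟨S.add_mem ha hx.1, hx.2.add_left_of_eqOn ha hfg hx.1⟩

theorem psc_eq_relaxed_block_jacobi_general
    {V : Type*} [NormedAddCommGroup V] [InnerProductSpace ℝ V]
    (J : ℕ) (Vsub : Fin J → Submodule ℝ V)
    (τ : ℝ)
    -- local energies `E j w u = E_j(w; u)` and `Et j x ũ = Ẽ_j(x; ũ)`
    (E : Fin J → V → V → ℝ) (Et : Fin J → V → (Fin J → V) → ℝ)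
    -- each local problem admits a unique minimizer over the corresponding subspace
    (hEtuniq : ∀ (j : Fin J) (utold : Fin J → V),
      ∃! x : V, x ∈ Vsub j ∧ ∀ y ∈ Vsub j, Et j x utold ≤ Et j y utold)
    -- compatibility assumption
    (hcompat : ∀ (j : Fin J) (wj : V), wj ∈ Vsub j →
      ∀ utold : Fin J → V, (∀ i, utold i ∈ Vsub i) →
        E j wj (∑ i, utold i) = Et j (utold j + wj) utold)
    -- PSC iterates
    (u : ℕ → V) (w : ℕ → Fin J → V)
    (hw : ∀ (n : ℕ) (j : Fin J), w (n + 1) j ∈ Vsub j ∧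
      ∀ y ∈ Vsub j, E j (w (n + 1) j) (u n) ≤ E j y (u n))
    (hu : ∀ n : ℕ, u (n + 1) = u n + τ • ∑ j, w (n + 1) j)
    -- relaxed block Jacobi iterates
    (ut : ℕ → Fin J → V) (uhat : ℕ → Fin J → V)
    (hut0 : ∀ j, ut 0 j ∈ Vsub j)
    (huhat : ∀ (n : ℕ) (j : Fin J), uhat (n + 1) j ∈ Vsub j ∧
      ∀ y ∈ Vsub j, Et j (uhat (n + 1) j) (ut n) ≤ Et j y (ut n))
    (hutrec : ∀ (n : ℕ) (j : Fin J), ut (n + 1) j = (1 - τ) • ut n j + τ • uhat (n + 1) j)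
    -- identical initialization
    (hinit : u 0 = ∑ j, ut 0 j) :
    ∀ n : ℕ, 1 ≤ n → u n = ∑ j, ut n j := by
  have hstep : ∀ n, u n = ∑ j, ut n j → (∀ j, ut n j ∈ Vsub j) →
      ∀ j, ut (n + 1) j = ut n j + τ • w (n + 1) j := by
    intro n hun hmem j
    have hhat : uhat (n + 1) j = ut n j + w (n + 1) j :=
      eq_add_of_isMinOn_of_existsUnique (S := (Vsub j).toAddSubgroup)
        (f := (E j · (u n))) (hmem j)
        (fun y hy => by rw [hun]; exact hcompat j y hy (ut n) hmem)
        (hEtuniq j (ut n)) (hw n j) (huhat n j)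
    rw [hutrec, hhat]
    module
  have hinv : ∀ n, u n = ∑ j, ut n j ∧ ∀ j, ut n j ∈ Vsub j := by
    intro n
    induction n with
    | zero => exact ⟨hinit, hut0⟩
    | succ n ih =>
      obtain ⟨hun, hmem⟩ := ih
      refine ⟨?_, fun j => ?_⟩
      · simp only [hu, hun, hstep n hun hmem, sum_add_distrib, smul_sum]
      · rw [hstep n hun hmem j]
        exact add_mem (hmem j) (Submodule.smul_mem _ _ (hw n j).1)
  exact fun n _ => (hinv n).1

/-- Theorem 3.4(a). Under the compatibility assumption
`E_j(w_j; u₁ + ⋯ + u_J) = Ẽ_j(u_j + w_j; (u₁, …, u_J))`, the parallel subspace correction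
method (PSC) is equivalent to the relaxed block Jacobi method: if `u⁽⁰⁾ = Σⱼ uⱼ⁽⁰⁾`, then
`u⁽ⁿ⁾ = Σⱼ uⱼ⁽ⁿ⁾` for all `n ≥ 1`. -/
theorem psc_eq_relaxed_block_jacobi
    {V : Type*} [NormedAddCommGroup V] [InnerProductSpace ℝ V] [FiniteDimensional ℝ V]
    (J : ℕ) (Vsub : Fin J → Submodule ℝ V)
    -- space decomposition `V = V₁ + ⋯ + V_J`
    (hdecomp : ∀ u : V, ∃ w : Fin J → V, (∀ j, w j ∈ Vsub j) ∧ u = ∑ j, w j)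
    (τ : ℝ) (hτ : 0 < τ)
    -- local energies `E j w u = E_j(w; u)` and `Et j x ũ = Ẽ_j(x; ũ)`
    (E : Fin J → V → V → ℝ) (Et : Fin J → V → (Fin J → V) → ℝ)
    -- each local problem admits a unique minimizer over the corresponding subspace
    (hEuniq : ∀ (j : Fin J) (uold : V),
      ∃! x : V, x ∈ Vsub j ∧ ∀ y ∈ Vsub j, E j x uold ≤ E j y uold)
    (hEtuniq : ∀ (j : Fin J) (utold : Fin J → V),
      ∃! x : V, x ∈ Vsub j ∧ ∀ y ∈ Vsub j, Et j x utold ≤ Et j y utold)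
    -- compatibility assumption
    (hcompat : ∀ (j : Fin J) (wj : V), wj ∈ Vsub j →
      ∀ utold : Fin J → V, (∀ i, utold i ∈ Vsub i) →
        E j wj (∑ i, utold i) = Et j (utold j + wj) utold)
    -- PSC iterates
    (u : ℕ → V) (w : ℕ → Fin J → V)
    (hw : ∀ (n : ℕ) (j : Fin J), w (n + 1) j ∈ Vsub j ∧
      ∀ y ∈ Vsub j, E j (w (n + 1) j) (u n) ≤ E j y (u n))
    (hu : ∀ n : ℕ, u (n + 1) = u n + τ • ∑ j, w (n + 1) j)
    -- relaxed block Jacobi iterates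
    (ut : ℕ → Fin J → V) (uhat : ℕ → Fin J → V)
    (hut0 : ∀ j, ut 0 j ∈ Vsub j)
    (huhat : ∀ (n : ℕ) (j : Fin J), uhat (n + 1) j ∈ Vsub j ∧
      ∀ y ∈ Vsub j, Et j (uhat (n + 1) j) (ut n) ≤ Et j y (ut n))
    (hutrec : ∀ (n : ℕ) (j : Fin J), ut (n + 1) j = (1 - τ) • ut n j + τ • uhat (n + 1) j)
    -- identical initialization
    (hinit : u 0 = ∑ j, ut 0 j) :
    ∀ n : ℕ, 1 ≤ n → u n = ∑ j, ut n j :=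
  psc_eq_relaxed_block_jacobi_general J Vsub τ E Et hEtuniq hcompat u w hw hu ut uhat hut0 huhat
    hutrec hinit
end

section
/- Under the compatibility assumption E_j(w_j; u₁ + ⋯ + u_J) = Ẽ_j(u_j + w_j; (u₁, …, u_J)) for all w_j ∈ V_j and (u₁, …, u_J) ∈ Ṽ, the successive subspace correction method is equivalent to the block Gauss–Seidel method: if u^{(0)} = Σ_{j=1}^J u_j^{(0)}, then the intermediate iterates satisfy u^{(n,j)} = Σ_{i=1}^{j} u_i^{(n+1)} + Σ_{i=j+1}^{J} u_i^{(n)} for all n ≥ 0 and 1 ≤ j ≤ J; in particular u^{(n)} = Σ_{j=1}^J u_j^{(n)} for all n ≥ 1. -/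
/-!
The compatibility assumption says that `w` minimizes `E_j(·; Σ ũ)` over `V_j` exactly when
`ũ_j + w` minimizes `Ẽ_j(·; ũ)` over `V_j`. Since the latter minimizer is unique, each SSC
correction `w_j⁽ⁿ⁺¹⁾` equals the Gauss–Seidel increment `u_j⁽ⁿ⁺¹⁾ - u_j⁽ⁿ⁾`, so by induction over
the blocks of a sweep, and then over the sweeps, every SSC iterate is the sum of the components
of the corresponding Gauss–Seidel state.
-/

open Finset

section Minimizer

variable {R V β : Type*} [Ring R] [AddCommGroup V] [Module R V] [Preorder β]

theorem IsMinOn.add_of_eq_comp_add {S : Submodule R V} {f g : V → β} {a w : V}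
    (ha : a ∈ S) (hfg : ∀ v ∈ S, f v = g (a + v)) (hwS : w ∈ S) (hw : IsMinOn f S w) :
    IsMinOn g S (a + w) := by
  intro y hy
  have hya : y - a ∈ S := S.sub_mem hy ha
  have : f w ≤ f (y - a) := hw hya
  rwa [hfg w hwS, hfg _ hya, add_sub_cancel] at this

theorem add_eq_of_isMinOn_of_eq_comp_add {S : Submodule R V} {f g : V → β} {a w x : V}
    (huniq : ∃! x, x ∈ S ∧ IsMinOn g S x)
    (ha : a ∈ S) (hfg : ∀ v ∈ S, f v = g (a + v)) (hwS : w ∈ S) (hw : IsMinOn f S w)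
    (hxS : x ∈ S) (hx : IsMinOn g S x) : a + w = x :=
  huniq.unique ⟨S.add_mem ha hwS, hw.add_of_eq_comp_add ha hfg hwS⟩ ⟨hxS, hx⟩

end Minimizer

namespace SubspaceCorrection

section GaussSeidelState

variable {V : Type*} {J : ℕ}

/-- The Gauss–Seidel state `(a₁, …, a_j, b_{j+1}, …, b_J)` after `j` block updates of a sweep
from `b` to `a`. -/
def gsState (a b : Fin J → V) (j : ℕ) : Fin J → V :=
  fun i => if (i : ℕ) < j then a i else b i

theorem gsState_of_le {a b : Fin J → V} {j : ℕ} (hj : J ≤ j) : gsState a b j = a :=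
  funext fun i => if_pos (i.isLt.trans_le hj)

theorem gsState_zero (a b : Fin J → V) : gsState a b 0 = b :=
  funext fun _ => if_neg (Nat.not_lt_zero _)

theorem mem_gsState {R : Type*} [Ring R] [AddCommGroup V] [Module R V] {S : Fin J → Submodule R V}
    {a b : Fin J → V} (ha : ∀ i, a i ∈ S i) (hb : ∀ i, b i ∈ S i) (j : ℕ) (i : Fin J) :
    gsState a b j i ∈ S i := by
  unfold gsState
  split_ifs
  exacts [ha i, hb i]

theorem sum_gsState_succ [AddCommGroup V] (a b : Fin J → V) {j : ℕ} (hj : j < J) :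
    ∑ i, gsState a b (j + 1) i = ∑ i, gsState a b j i + (a ⟨j, hj⟩ - b ⟨j, hj⟩) := by
  rw [← sub_eq_iff_eq_add', ← sum_sub_distrib, sum_eq_single ⟨j, hj⟩]
  · simp [gsState]
  · intro i _ hi
    have hij : (i : ℕ) ≠ j := fun h => hi (Fin.ext h)
    have hlt : (i : ℕ) < j + 1 ↔ (i : ℕ) < j := by omega
    simp only [gsState, hlt, sub_self]
  · exact fun h => absurd (mem_univ _) h

theorem sum_filter_lt_add_sum_filter_le [AddCommGroup V] (a b : Fin J → V) (j : ℕ) :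
    ∑ i ∈ univ.filter (fun i : Fin J => (i : ℕ) < j), a i +
        ∑ i ∈ univ.filter (fun i : Fin J => j ≤ (i : ℕ)), b i =
      ∑ i, gsState a b j i := by
  simp only [gsState, sum_ite, not_lt]

end GaussSeidelState

variable {R V : Type*} [Ring R] [AddCommGroup V] [Module R V] {J : ℕ}

theorem ssc_sweep_eq_sum_gsState (S : Fin J → Submodule R V)
    (E : Fin J → V → V → ℝ) (Et : Fin J → V → (Fin J → V) → ℝ)
    (hEtuniq : ∀ (j : Fin J) (ũ : Fin J → V), ∃! x, x ∈ S j ∧ ∀ y ∈ S j, Et j x ũ ≤ Et j y ũ)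
    (hcompat : ∀ (j : Fin J) (wj : V), wj ∈ S j → ∀ ũ : Fin J → V, (∀ i, ũ i ∈ S i) →
      E j wj (∑ i, ũ i) = Et j (ũ j + wj) ũ)
    {uOld uNew : Fin J → V} (hOld : ∀ i, uOld i ∈ S i)
    (hNew : ∀ i, uNew i ∈ S i ∧ IsMinOn (Et i · (gsState uNew uOld i)) (S i) (uNew i))
    {s : ℕ → V} {w : Fin J → V} (hw : ∀ j, w j ∈ S j ∧ IsMinOn (E j · (s j)) (S j) (w j))
    (hs : ∀ j : Fin J, s (j + 1) = s j + w j) (hs0 : s 0 = ∑ i, uOld i) :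
    ∀ j ≤ J, s j = ∑ i, gsState uNew uOld j i := by
  have hmem := mem_gsState (fun i => (hNew i).1) hOld
  intro j
  induction j with
  | zero => intro _; rwa [gsState_zero]
  | succ j ih =>
    intro hj
    set jf : Fin J := ⟨j, hj⟩
    have hsj := ih (Nat.le_of_succ_le hj)
    have hstate : gsState uNew uOld j jf = uOld jf := if_neg (lt_irrefl j)
    have hcorr : uOld jf + w jf = uNew jf := by
      refine add_eq_of_isMinOn_of_eq_comp_add (hEtuniq jf _) (hOld jf) (f := (E jf · (s j)))
        (fun v hv => ?_) (hw jf).1 (hw jf).2 (hNew jf).1 (hNew jf).2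
      rw [hsj, hcompat jf v hv _ (hmem j), hstate]
    rw [hs jf, hsj, sum_gsState_succ _ _ hj, ← hcorr, add_sub_cancel_left]

end SubspaceCorrection

open SubspaceCorrection

theorem ssc_eq_block_gauss_seidel_general
    {V : Type*} [NormedAddCommGroup V] [InnerProductSpace ℝ V]
    (J : ℕ) (Vsub : Fin J → Submodule ℝ V)
    -- local energies `E j w u = E_j(w; u)` and `Et j x ũ = Ẽ_j(x; ũ)`
    (E : Fin J → V → V → ℝ) (Et : Fin J → V → (Fin J → V) → ℝ)
    -- each local problem admits a unique minimizer over the corresponding subspace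
    (hEtuniq : ∀ (j : Fin J) (utold : Fin J → V),
      ∃! x : V, x ∈ Vsub j ∧ ∀ y ∈ Vsub j, Et j x utold ≤ Et j y utold)
    -- compatibility assumption
    (hcompat : ∀ (j : Fin J) (wj : V), wj ∈ Vsub j →
      ∀ utold : Fin J → V, (∀ i, utold i ∈ Vsub i) →
        E j wj (∑ i, utold i) = Et j (utold j + wj) utold)
    -- SSC iterates: `u n j` is the intermediate iterate `u⁽ⁿ⁺ʲᐟᴶ⁾`, for `0 ≤ j ≤ J`
    (u : ℕ → ℕ → V) (w : ℕ → Fin J → V)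
    (hw : ∀ (n : ℕ) (j : Fin J), w (n + 1) j ∈ Vsub j ∧
      ∀ y ∈ Vsub j, E j (w (n + 1) j) (u n j.1) ≤ E j y (u n j.1))
    (hurec : ∀ (n : ℕ) (j : Fin J), u n (j.1 + 1) = u n j.1 + w (n + 1) j)
    (huchain : ∀ n : ℕ, u (n + 1) 0 = u n J)
    -- block Gauss–Seidel iterates
    (ut : ℕ → Fin J → V)
    (hut0 : ∀ j, ut 0 j ∈ Vsub j)
    (hut : ∀ (n : ℕ) (j : Fin J), ut (n + 1) j ∈ Vsub j ∧
      ∀ y ∈ Vsub j,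
        Et j (ut (n + 1) j) (fun i => if i < j then ut (n + 1) i else ut n i) ≤
          Et j y (fun i => if i < j then ut (n + 1) i else ut n i))
    -- identical initialization
    (hinit : u 0 0 = ∑ j, ut 0 j) :
    (∀ (n : ℕ) (j : ℕ), j ≤ J →
      u n j = (∑ i ∈ Finset.univ.filter (fun i : Fin J => (i : ℕ) < j), ut (n + 1) i) +
        ∑ i ∈ Finset.univ.filter (fun i : Fin J => j ≤ (i : ℕ)), ut n i) ∧
      ∀ n : ℕ, 1 ≤ n → u n 0 = ∑ j, ut n j := by
  have hmem : ∀ n i, ut n i ∈ Vsub i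
    | 0, i => hut0 i
    | n + 1, i => (hut n i).1
  have hsweep : ∀ n, u n 0 = ∑ j, ut n j → ∀ j ≤ J, u n j = ∑ i, gsState (ut (n + 1)) (ut n) j i :=
    fun n => ssc_sweep_eq_sum_gsState Vsub E Et hEtuniq hcompat (hmem n) (hut n) (hw n) (hurec n)
  have hstart : ∀ n, u n 0 = ∑ j, ut n j := by
    intro n
    induction n with
    | zero => exact hinit
    | succ n ih => rw [huchain, hsweep n ih J le_rfl, gsState_of_le le_rfl]
  refine ⟨fun n j hj => ?_, fun n _ => hstart n⟩
  rw [sum_filter_lt_add_sum_filter_le]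
  exact hsweep n (hstart n) j hj

/-- Theorem 3.4(b). Under the compatibility assumption
`E_j(w_j; u₁ + ⋯ + u_J) = Ẽ_j(u_j + w_j; (u₁, …, u_J))`, the successive subspace correction
method (SSC) is equivalent to the block Gauss–Seidel method: if `u⁽⁰⁾ = Σⱼ uⱼ⁽⁰⁾`, then the
intermediate iterates satisfy `u⁽ⁿ'ʲ⁾ = Σ_{i ≤ j} uᵢ⁽ⁿ⁺¹⁾ + Σ_{i > j} uᵢ⁽ⁿ⁾`, and in
particular `u⁽ⁿ⁾ = Σⱼ uⱼ⁽ⁿ⁾` for all `n ≥ 1`. -/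
theorem ssc_eq_block_gauss_seidel
    {V : Type*} [NormedAddCommGroup V] [InnerProductSpace ℝ V] [FiniteDimensional ℝ V]
    (J : ℕ) (Vsub : Fin J → Submodule ℝ V)
    -- space decomposition `V = V₁ + ⋯ + V_J`
    (hdecomp : ∀ u : V, ∃ w : Fin J → V, (∀ j, w j ∈ Vsub j) ∧ u = ∑ j, w j)
    -- local energies `E j w u = E_j(w; u)` and `Et j x ũ = Ẽ_j(x; ũ)`
    (E : Fin J → V → V → ℝ) (Et : Fin J → V → (Fin J → V) → ℝ)
    -- each local problem admits a unique minimizer over the corresponding subspace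
    (hEuniq : ∀ (j : Fin J) (uold : V),
      ∃! x : V, x ∈ Vsub j ∧ ∀ y ∈ Vsub j, E j x uold ≤ E j y uold)
    (hEtuniq : ∀ (j : Fin J) (utold : Fin J → V),
      ∃! x : V, x ∈ Vsub j ∧ ∀ y ∈ Vsub j, Et j x utold ≤ Et j y utold)
    -- compatibility assumption
    (hcompat : ∀ (j : Fin J) (wj : V), wj ∈ Vsub j →
      ∀ utold : Fin J → V, (∀ i, utold i ∈ Vsub i) →
        E j wj (∑ i, utold i) = Et j (utold j + wj) utold)
    -- SSC iterates: `u n j` is the intermediate iterate `u⁽ⁿ⁺ʲᐟᴶ⁾`, for `0 ≤ j ≤ J`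
    (u : ℕ → ℕ → V) (w : ℕ → Fin J → V)
    (hw : ∀ (n : ℕ) (j : Fin J), w (n + 1) j ∈ Vsub j ∧
      ∀ y ∈ Vsub j, E j (w (n + 1) j) (u n j.1) ≤ E j y (u n j.1))
    (hurec : ∀ (n : ℕ) (j : Fin J), u n (j.1 + 1) = u n j.1 + w (n + 1) j)
    (huchain : ∀ n : ℕ, u (n + 1) 0 = u n J)
    -- block Gauss–Seidel iterates
    (ut : ℕ → Fin J → V)
    (hut0 : ∀ j, ut 0 j ∈ Vsub j)
    (hut : ∀ (n : ℕ) (j : Fin J), ut (n + 1) j ∈ Vsub j ∧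
      ∀ y ∈ Vsub j,
        Et j (ut (n + 1) j) (fun i => if i < j then ut (n + 1) i else ut n i) ≤
          Et j y (fun i => if i < j then ut (n + 1) i else ut n i))
    -- identical initialization
    (hinit : u 0 0 = ∑ j, ut 0 j) :
    (∀ (n : ℕ) (j : ℕ), j ≤ J →
      u n j = (∑ i ∈ Finset.univ.filter (fun i : Fin J => (i : ℕ) < j), ut (n + 1) i) +
        ∑ i ∈ Finset.univ.filter (fun i : Fin J => j ≤ (i : ℕ)), ut n i) ∧
      ∀ n : ℕ, 1 ≤ n → u n 0 = ∑ j, ut n j :=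
  ssc_eq_block_gauss_seidel_general J Vsub E Et hEtuniq hcompat u w hw hurec huchain ut hut0 hut
    hinit
end

section
/- The von Neumann alternating projection algorithm is a dualization of the successive subspace correction method applied to the dual problem min{½‖p − f̄‖² : p ∈ V₁ + ⋯ + V_J}: the two sequences satisfy u^{(n,j)} = f − p^{(n,j)} for all n ≥ 0 and 0 ≤ j ≤ J. -/
/-! Both the affine projection `x` of `v` onto `ū + M` and the dual correction `r`, the
projection of `v − ū` onto `Mᗮ`, are pinned down by orthogonality relations; comparing them
shows `x − (v − r)` lies in `Mᗮ ∩ Mᗮᗮ = 0`, i.e. each von Neumann step is `v ↦ v − r`. Since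
`p⁽ⁿ'ʲ⁾` is advanced by exactly `r`, induction over the sweeps gives `u = f − p` throughout. -/

namespace Submodule

variable {V : Type*} [NormedAddCommGroup V] [InnerProductSpace ℝ V]

theorem sub_mem_orthogonal_of_forall_norm_sub_le {K : Submodule ℝ V} {w x : V} (hx : x ∈ K)
    (hmin : ∀ y ∈ K, ‖x - w‖ ≤ ‖y - w‖) : w - x ∈ Kᗮ := by
  have hinf : ‖w - x‖ = ⨅ y : K, ‖w - y‖ := by
    refine le_antisymm (le_ciInf fun y => ?_) ?_
    · rw [norm_sub_rev, norm_sub_rev w]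
      exact hmin y y.2
    · exact ciInf_le ⟨0, Set.forall_mem_range.2 fun _ => norm_nonneg _⟩ (⟨x, hx⟩ : K)
  exact (mem_orthogonal' K _).2 ((norm_eq_iInf_iff_real_inner_eq_zero K hx).1 hinf)

theorem eq_sub_of_forall_norm_sub_le {M : Submodule ℝ V} {ubar v x r : V}
    (hx : x - ubar ∈ M) (hxmin : ∀ k, k - ubar ∈ M → ‖x - v‖ ≤ ‖k - v‖)
    (hr : r ∈ Mᗮ) (hrmin : ∀ y ∈ Mᗮ, ‖r - (v - ubar)‖ ≤ ‖y - (v - ubar)‖) :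
    x = v - r := by
  have hxperp : v - x ∈ Mᗮ := by
    have := sub_mem_orthogonal_of_forall_norm_sub_le (w := v - ubar) hx fun y hy => by
      convert hxmin (y + ubar) (by simpa using hy) using 2 <;> abel
    convert this using 1
    abel
  have hrperp : v - ubar - r ∈ Mᗮᗮ := sub_mem_orthogonal_of_forall_norm_sub_le hr hrmin
  have hdiff : x - (v - r) ∈ Mᗮ ⊓ Mᗮᗮ := by
    refine mem_inf.2 ⟨?_, ?_⟩
    · convert Mᗮ.sub_mem hr hxperp using 1
      abel
    · convert Mᗮᗮ.sub_mem (le_orthogonal_orthogonal M hx) hrperp using 1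
      abel
  rw [inf_orthogonal_eq_bot, mem_bot, sub_eq_zero] at hdiff
  exact hdiff

end Submodule

theorem sweeps_eq_of_step {α : Type*} {J : ℕ} {a b : ℕ → ℕ → α} (h00 : a 0 0 = b 0 0)
    (hstep : ∀ (n : ℕ) (j : Fin J), a n j = b n j → a n (j + 1) = b n (j + 1))
    (ha : ∀ n, a (n + 1) 0 = a n J) (hb : ∀ n, b (n + 1) 0 = b n J) :
    ∀ n j, j ≤ J → a n j = b n j := by
  have sweep : ∀ n, a n 0 = b n 0 → ∀ j, j ≤ J → a n j = b n j := by
    intro n h0 j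
    induction j with
    | zero => exact fun _ => h0
    | succ j ih => exact fun hj => hstep n ⟨j, hj⟩ (ih (Nat.le_of_succ_le hj))
  intro n
  induction n with
  | zero => exact sweep 0 h00
  | succ n ih => exact sweep (n + 1) (by rw [ha, hb, ih J le_rfl])

theorem von_neumann_is_dualization_of_ssc_general
    {V : Type*} [NormedAddCommGroup V] [InnerProductSpace ℝ V]
    (J : ℕ) (M : Fin J → Submodule ℝ V) (ubar f : V)
    -- the affine subspaces `K_j = M_j + {ū}`
    (K : Fin J → Set V) (hK : ∀ j, K j = {x : V | x - ubar ∈ M j})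
    -- von Neumann iterates: `u n j` is `u⁽ⁿ'ʲ⁾` for `0 ≤ j ≤ J`
    (u : ℕ → ℕ → V)
    (hu00 : u 0 0 = f)
    (huproj : ∀ (n : ℕ) (j : Fin J), u n (j.1 + 1) ∈ K j ∧
      ∀ k ∈ K j, ‖u n (j.1 + 1) - u n j.1‖ ≤ ‖k - u n j.1‖)
    (huchain : ∀ n : ℕ, u (n + 1) 0 = u n J)
    -- SSC iterates for the dual problem, with `V_j = M_jᗮ` and zero initial guess
    (p : ℕ → ℕ → V) (r : ℕ → Fin J → V)
    (hp00 : p 0 0 = 0)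
    (hr : ∀ (n : ℕ) (j : Fin J), r n j ∈ (M j)ᗮ ∧
      ∀ y ∈ (M j)ᗮ, ‖r n j - ((f - ubar) - p n j.1)‖ ≤ ‖y - ((f - ubar) - p n j.1)‖)
    (hprec : ∀ (n : ℕ) (j : Fin J), p n (j.1 + 1) = p n j.1 + r n j)
    (hpchain : ∀ n : ℕ, p (n + 1) 0 = p n J) :
    ∀ (n : ℕ) (j : ℕ), j ≤ J → u n j = f - p n j := by
  refine sweeps_eq_of_step (by rw [hu00, hp00, sub_zero]) (fun n j hj => ?_) huchain
    (fun n => by rw [hpchain])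
  obtain ⟨hxK, hxmin⟩ := huproj n j
  obtain ⟨hrM, hrmin⟩ := hr n j
  have hfp : f - ubar - p n j = u n j - ubar := by rw [hj]; abel
  rw [hfp] at hrmin
  rw [hK] at hxK hxmin
  rw [Submodule.eq_sub_of_forall_norm_sub_le hxK hxmin hrM hrmin, hprec, hj]
  abel

/-- Theorem 4.1. The von Neumann alternating projection algorithm for
projecting `f` onto the intersection of the affine subspaces `K_j = M_j + {ū}` is a
dualization of the successive subspace correction method applied to the dual problem
`min { ½‖p − f̄‖² : p ∈ V₁ + ⋯ + V_J }` with `V_j = M_jᗮ` and `f̄ = f − ū`: the two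
sequences satisfy `u⁽ⁿ'ʲ⁾ = f − p⁽ⁿ'ʲ⁾` for all `n ≥ 0` and `0 ≤ j ≤ J`. -/
theorem von_neumann_is_dualization_of_ssc
    {V : Type*} [NormedAddCommGroup V] [InnerProductSpace ℝ V] [FiniteDimensional ℝ V]
    (J : ℕ) (M : Fin J → Submodule ℝ V) (ubar f : V)
    -- the affine subspaces `K_j = M_j + {ū}`
    (K : Fin J → Set V) (hK : ∀ j, K j = {x : V | x - ubar ∈ M j})
    -- von Neumann iterates: `u n j` is `u⁽ⁿ'ʲ⁾` for `0 ≤ j ≤ J`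
    (u : ℕ → ℕ → V)
    (hu00 : u 0 0 = f)
    (huproj : ∀ (n : ℕ) (j : Fin J), u n (j.1 + 1) ∈ K j ∧
      ∀ k ∈ K j, ‖u n (j.1 + 1) - u n j.1‖ ≤ ‖k - u n j.1‖)
    (huchain : ∀ n : ℕ, u (n + 1) 0 = u n J)
    -- SSC iterates for the dual problem, with `V_j = M_jᗮ` and zero initial guess
    (p : ℕ → ℕ → V) (r : ℕ → Fin J → V)
    (hp00 : p 0 0 = 0)
    (hr : ∀ (n : ℕ) (j : Fin J), r n j ∈ (M j)ᗮ ∧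
      ∀ y ∈ (M j)ᗮ, ‖r n j - ((f - ubar) - p n j.1)‖ ≤ ‖y - ((f - ubar) - p n j.1)‖)
    (hprec : ∀ (n : ℕ) (j : Fin J), p n (j.1 + 1) = p n j.1 + r n j)
    (hpchain : ∀ n : ℕ, p (n + 1) 0 = p n J) :
    ∀ (n : ℕ) (j : ℕ), j ≤ J → u n j = f - p n j :=
  von_neumann_is_dualization_of_ssc_general J M ubar f K hK u hu00 huproj huchain p r hp00 hr hprec
    hpchain
end

section
/- The Dykstra algorithm is a dualization of the successive subspace correction method applied to the dual problem min_{(p₁,…,p_J)∈V^J} ½‖Σ_j p_j − f‖² + Σ_j σ_{K_j}(p_j): for all n ≥ 1, u^{(n)} = f − Σ_{j=1}^J p_j^{(n)} and q_j^{(n)} = p_j^{(n)} for every 1 ≤ j ≤ J. -/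
/-!
Each block update of the dual Gauss–Seidel sweep is a proximal step for `σ_{K_j}`, and by Moreau's
decomposition `prox_{σ_K} = id - proj_K`. Hence if the Dykstra iterate satisfies
`u^{(n,j-1)} + q_j^{(n)} = f - Σ_{i<j} p_i^{(n+1)} - Σ_{i>j} p_i^{(n)}`, the new block is
`p_j^{(n+1)} = u^{(n,j-1)} + q_j^{(n)} - u^{(n,j)}`, which is exactly the Dykstra increment
`q_j^{(n+1)}`; induction over blocks and sweeps propagates the invariant.
-/

open scoped RealInnerProductSpace

noncomputable section

def suppFn {E : Type*} [NormedAddCommGroup E] [InnerProductSpace ℝ E]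
    (K : Set E) (p : E) : EReal :=
  ⨆ u : K, ((⟪p, (u : E)⟫ : ℝ) : EReal)

section Moreau

variable {E : Type*} [NormedAddCommGroup E] [InnerProductSpace ℝ E]

theorem inner_le_suppFn {K : Set E} {π : E} (hπ : π ∈ K) (p : E) :
    ((⟪p, π⟫ : ℝ) : EReal) ≤ suppFn K p :=
  le_iSup_of_le (⟨π, hπ⟩ : K) le_rfl

theorem suppFn_eq_inner_of_forall_inner_le {K : Set E} {p π : E} (hπ : π ∈ K)
    (h : ∀ k ∈ K, ⟪p, k⟫ ≤ ⟪p, π⟫) : suppFn K p = ⟪p, π⟫ :=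
  le_antisymm (iSup_le fun k => EReal.coe_le_coe_iff.mpr (h k k.2)) (inner_le_suppFn hπ p)

theorem inner_le_inner_of_forall_norm_sub_le {K : Set E} (hK : Convex ℝ K) {v π : E}
    (hπ : π ∈ K) (hproj : ∀ k ∈ K, ‖π - v‖ ≤ ‖k - v‖) :
    ∀ k ∈ K, ⟪v - π, k⟫ ≤ ⟪v - π, π⟫ := by
  have : Nonempty K := ⟨⟨π, hπ⟩⟩
  have hinf : ‖v - π‖ = ⨅ k : K, ‖v - (k : E)‖ := by
    refine le_antisymm (le_ciInf fun k => ?_)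
      (ciInf_le ⟨0, by rintro _ ⟨k, rfl⟩; exact norm_nonneg _⟩ (⟨π, hπ⟩ : K))
    simpa only [norm_sub_rev v] using hproj k k.2
  intro k hk
  have := (norm_eq_iInf_iff_real_inner_le_zero hK hπ).mp hinf k hk
  rw [inner_sub_right] at this
  linarith

/-- Moreau decomposition: `prox_{σ_K} v = v - proj_K v`. -/
theorem eq_sub_of_forall_half_sq_add_suppFn_le {K : Set E} (hK : Convex ℝ K) {v π p : E}
    (hπ : π ∈ K) (hproj : ∀ k ∈ K, ‖π - v‖ ≤ ‖k - v‖)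
    (hp : ∀ p' : E, ((1 / 2 * ‖p - v‖ ^ 2 : ℝ) : EReal) + suppFn K p ≤
      ((1 / 2 * ‖p' - v‖ ^ 2 : ℝ) : EReal) + suppFn K p') :
    p = v - π := by
  have hval := hp (v - π)
  rw [suppFn_eq_inner_of_forall_inner_le hπ (inner_le_inner_of_forall_norm_sub_le hK hπ hproj),
    show v - π - v = -π by abel, norm_neg] at hval
  have hreal : 1 / 2 * ‖p - v‖ ^ 2 + ⟪p, π⟫ ≤ 1 / 2 * ‖π‖ ^ 2 + ⟪v - π, π⟫ := by
    exact_mod_cast (add_le_add_right (inner_le_suppFn hπ p) _).trans hval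
  have hsq : ‖p - (v - π)‖ ^ 2 ≤ 0 := by
    rw [show p - (v - π) = (p - v) + π by abel, norm_add_sq_real, inner_sub_left]
    rw [inner_sub_left, real_inner_self_eq_norm_sq] at hreal
    linarith
  exact sub_eq_zero.mp (norm_eq_zero.mp (pow_eq_zero_iff two_ne_zero |>.mp
    (le_antisymm hsq (sq_nonneg _))))

end Moreau

theorem Finset.sum_univ_eq_sum_lt_add_add_sum_gt {ι M : Type*} [Fintype ι] [LinearOrder ι]
    [AddCommMonoid M] (g : ι → M) (j : ι) :
    ∑ i, g i = ∑ i ∈ univ.filter (· < j), g i + g j + ∑ i ∈ univ.filter (j < ·), g i := by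
  have trichotomy : ∀ i, g i =
      (if i < j then g i else 0) + (if j = i then g i else 0) + (if j < i then g i else 0) := by
    intro i
    rcases lt_trichotomy i j with h | rfl | h
    · simp [h, h.ne', h.not_gt]
    · simp
    · simp [h, h.ne, h.not_gt]
  rw [sum_congr rfl fun i _ => trichotomy i, sum_add_distrib, sum_add_distrib, sum_ite_eq,
    if_pos (mem_univ j), ← sum_filter, ← sum_filter]

section Sweep

variable {J : ℕ} {V : Type*}

def partialSweep (new old : Fin J → V) (m : ℕ) (i : Fin J) : V :=
  if i.1 < m then new i else old i

theorem partialSweep_zero (new old : Fin J → V) : partialSweep new old 0 = old := by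
  funext i; simp [partialSweep]

theorem partialSweep_self (new old : Fin J → V) : partialSweep new old J = new := by
  funext i; simp [partialSweep]

variable [AddCommGroup V]

theorem sum_partialSweep_val (new old : Fin J → V) (j : Fin J) :
    ∑ i, partialSweep new old j.1 i =
      ∑ i ∈ Finset.univ.filter (· < j), new i + old j + ∑ i ∈ Finset.univ.filter (j < ·), old i := by
  rw [Finset.sum_univ_eq_sum_lt_add_add_sum_gt _ j]
  refine congr_arg₂ _ (congr_arg₂ _ (Finset.sum_congr rfl fun i hi => ?_) ?_)
    (Finset.sum_congr rfl fun i hi => ?_)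
  all_goals simp_all [partialSweep, not_lt_of_gt]

theorem sum_partialSweep_val_add_one (new old : Fin J → V) (j : Fin J) :
    ∑ i, partialSweep new old (j.1 + 1) i =
      ∑ i ∈ Finset.univ.filter (· < j), new i + new j + ∑ i ∈ Finset.univ.filter (j < ·), old i := by
  rw [Finset.sum_univ_eq_sum_lt_add_add_sum_gt _ j]
  refine congr_arg₂ _ (congr_arg₂ _ (Finset.sum_congr rfl fun i hi => ?_) ?_)
    (Finset.sum_congr rfl fun i hi => ?_)
  all_goals simp_all [partialSweep]
  omega

end Sweep

section Dykstra

variable {V : Type*} [NormedAddCommGroup V] [InnerProductSpace ℝ V] {J : ℕ} {K : Fin J → Set V}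
  {f : V} {u : ℕ → V} {q q' p p' : Fin J → V}

theorem dykstra_sweep_eq_ssc_sweep (hK : ∀ j, Convex ℝ (K j))
    (hu₀ : u 0 = f - ∑ i, p i) (hq : ∀ j, q j = p j)
    (hproj : ∀ j : Fin J, u (j.1 + 1) ∈ K j ∧
      ∀ k ∈ K j, ‖u (j.1 + 1) - (u j.1 + q j)‖ ≤ ‖k - (u j.1 + q j)‖)
    (hqrec : ∀ j : Fin J, q' j = q j + u j.1 - u (j.1 + 1))
    (hmin : ∀ (j : Fin J) (pj : V),
      ((1 / 2 * ‖p' j + ((∑ i ∈ Finset.univ.filter (· < j), p' i) +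
          ∑ i ∈ Finset.univ.filter (j < ·), p i) - f‖ ^ 2 : ℝ) : EReal) + suppFn (K j) (p' j) ≤
      ((1 / 2 * ‖pj + ((∑ i ∈ Finset.univ.filter (· < j), p' i) +
          ∑ i ∈ Finset.univ.filter (j < ·), p i) - f‖ ^ 2 : ℝ) : EReal) + suppFn (K j) pj) :
    u J = f - ∑ i, p' i ∧ ∀ j, q' j = p' j := by
  have residual (j : Fin J) (hu : u j.1 = f - ∑ i, partialSweep p' p j.1 i) :
      u j.1 + q j = f - ((∑ i ∈ Finset.univ.filter (· < j), p' i) +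
        ∑ i ∈ Finset.univ.filter (j < ·), p i) := by
    rw [hu, hq, sum_partialSweep_val]
    abel
  have block (j : Fin J) (hu : u j.1 = f - ∑ i, partialSweep p' p j.1 i) :
      p' j = u j.1 + q j - u (j.1 + 1) := by
    obtain ⟨hmem, hnearest⟩ := hproj j
    rw [residual j hu] at hnearest ⊢
    refine eq_sub_of_forall_half_sq_add_suppFn_le (hK j) hmem hnearest fun pj => ?_
    simpa only [sub_sub_eq_add_sub] using hmin j pj
  have invariant : ∀ m ≤ J, u m = f - ∑ i, partialSweep p' p m i := by
    intro m
    induction m with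
    | zero => intro _; rwa [partialSweep_zero]
    | succ m ih =>
      intro hm
      have hu := ih (by omega)
      have hstep : u (m + 1) = u m + q ⟨m, hm⟩ - p' ⟨m, hm⟩ := by
        rw [block ⟨m, hm⟩ hu]
        abel
      rw [hstep, residual ⟨m, hm⟩ hu, sum_partialSweep_val_add_one p' p ⟨m, hm⟩]
      abel
  refine ⟨partialSweep_self p' p ▸ invariant J le_rfl, fun j => ?_⟩
  rw [hqrec, block j (invariant j.1 j.2.le), add_comm (u j.1)]

end Dykstra

theorem dykstra_is_dualization_of_ssc_general
    {V : Type*} [NormedAddCommGroup V] [InnerProductSpace ℝ V]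
    (J : ℕ) (K : Fin J → Set V)
    (hK : ∀ j, (K j).Nonempty ∧ IsClosed (K j) ∧ Convex ℝ (K j))
    (f : V)
    -- Dykstra iterates: `u n j` is `u⁽ⁿ'ʲ⁾` for `0 ≤ j ≤ J`, `u⁽ⁿ⁾ = u n 0`
    (u : ℕ → ℕ → V) (q : ℕ → Fin J → V)
    (hu00 : u 0 0 = f) (hq0 : ∀ j, q 0 j = 0)
    (huproj : ∀ (n : ℕ) (j : Fin J), u n (j.1 + 1) ∈ K j ∧
      ∀ k ∈ K j, ‖u n (j.1 + 1) - (u n j.1 + q n j)‖ ≤ ‖k - (u n j.1 + q n j)‖)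
    (hqrec : ∀ (n : ℕ) (j : Fin J), q (n + 1) j = q n j + u n j.1 - u n (j.1 + 1))
    (huchain : ∀ n : ℕ, u (n + 1) 0 = u n J)
    -- SSC (block Gauss–Seidel) iterates for the dual problem, with zero initial guess
    (p : ℕ → Fin J → V)
    (hp0 : ∀ j, p 0 j = 0)
    (hpmin : ∀ (n : ℕ) (j : Fin J), ∀ pj : V,
      ((1 / 2 * ‖p (n + 1) j + ((∑ i ∈ Finset.univ.filter (· < j), p (n + 1) i) +
          ∑ i ∈ Finset.univ.filter (j < ·), p n i) - f‖ ^ 2 : ℝ) : EReal) +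
        suppFn (K j) (p (n + 1) j) ≤
      ((1 / 2 * ‖pj + ((∑ i ∈ Finset.univ.filter (· < j), p (n + 1) i) +
          ∑ i ∈ Finset.univ.filter (j < ·), p n i) - f‖ ^ 2 : ℝ) : EReal) +
        suppFn (K j) pj) :
    ∀ n : ℕ, 1 ≤ n → u n 0 = f - ∑ j, p n j ∧ ∀ j, q n j = p n j := by
  have all_sweeps (n : ℕ) : u n 0 = f - ∑ j, p n j ∧ ∀ j, q n j = p n j := by
    induction n with
    | zero => exact ⟨by simp [hu00, hp0], fun j => (hq0 j).trans (hp0 j).symm⟩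
    | succ n ih =>
      rw [huchain]
      exact dykstra_sweep_eq_ssc_sweep (fun j => (hK j).2.2) ih.1 ih.2 (huproj n) (hqrec n)
        (hpmin n)
  exact fun n _ => all_sweeps n

/-- Theorem 4.3. The Dykstra algorithm for projecting `f` onto the
intersection of closed convex sets `K₁, …, K_J` is a dualization of the successive subspace
correction (block Gauss–Seidel) method applied to the dual problem
`min ½‖Σⱼ pⱼ − f‖² + Σⱼ σ_{Kⱼ}(pⱼ)`: for all `n ≥ 1`, `u⁽ⁿ⁾ = f − Σⱼ pⱼ⁽ⁿ⁾` and
`qⱼ⁽ⁿ⁾ = pⱼ⁽ⁿ⁾` for every `j`. -/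
theorem dykstra_is_dualization_of_ssc
    {V : Type*} [NormedAddCommGroup V] [InnerProductSpace ℝ V] [FiniteDimensional ℝ V]
    (J : ℕ) (K : Fin J → Set V)
    (hK : ∀ j, (K j).Nonempty ∧ IsClosed (K j) ∧ Convex ℝ (K j))
    (f : V)
    -- Dykstra iterates: `u n j` is `u⁽ⁿ'ʲ⁾` for `0 ≤ j ≤ J`, `u⁽ⁿ⁾ = u n 0`
    (u : ℕ → ℕ → V) (q : ℕ → Fin J → V)
    (hu00 : u 0 0 = f) (hq0 : ∀ j, q 0 j = 0)
    (huproj : ∀ (n : ℕ) (j : Fin J), u n (j.1 + 1) ∈ K j ∧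
      ∀ k ∈ K j, ‖u n (j.1 + 1) - (u n j.1 + q n j)‖ ≤ ‖k - (u n j.1 + q n j)‖)
    (hqrec : ∀ (n : ℕ) (j : Fin J), q (n + 1) j = q n j + u n j.1 - u n (j.1 + 1))
    (huchain : ∀ n : ℕ, u (n + 1) 0 = u n J)
    -- SSC (block Gauss–Seidel) iterates for the dual problem, with zero initial guess
    (p : ℕ → Fin J → V)
    (hp0 : ∀ j, p 0 j = 0)
    (hpmin : ∀ (n : ℕ) (j : Fin J), ∀ pj : V,
      ((1 / 2 * ‖p (n + 1) j + ((∑ i ∈ Finset.univ.filter (· < j), p (n + 1) i) +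
          ∑ i ∈ Finset.univ.filter (j < ·), p n i) - f‖ ^ 2 : ℝ) : EReal) +
        suppFn (K j) (p (n + 1) j) ≤
      ((1 / 2 * ‖pj + ((∑ i ∈ Finset.univ.filter (· < j), p (n + 1) i) +
          ∑ i ∈ Finset.univ.filter (j < ·), p n i) - f‖ ^ 2 : ℝ) : EReal) +
        suppFn (K j) pj) :
    ∀ n : ℕ, 1 ≤ n → u n 0 = f - ∑ j, p n j ∧ ∀ j, q n j = p n j :=
  dykstra_is_dualization_of_ssc_general J K hK f u q hu00 hq0 huproj hqrec huchain p hp0 hpmin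
end
end

section
/- The parallel von Neumann algorithm is a dualization of the parallel subspace correction method applied to the dual problem min{½‖p − f̄‖² : p ∈ V₁ + ⋯ + V_J}: the two sequences satisfy u^{(n)} = f − p^{(n)} for all n ≥ 1. -/
/- In the paper's notation, with `v = u⁽ⁿ⁾`: the nearest point of the affine space `ū + M_j` to
`v` and the nearest point of `M_jᗮ` to `v − ū` add up to `v`, because the two residuals are
orthogonal to complementary subspaces. Hence `u_j⁽ⁿ⁺¹⁾ = u⁽ⁿ⁾ − r_j⁽ⁿ⁺¹⁾` as soon as
`u⁽ⁿ⁾ = f − p⁽ⁿ⁾`, and the two update rules then agree term by term. -/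

section NearestPoint

variable {V : Type*} [NormedAddCommGroup V] [InnerProductSpace ℝ V]

def IsNearestPoint (s : Set V) (v x : V) : Prop :=
  x ∈ s ∧ ∀ y ∈ s, ‖x - v‖ ≤ ‖y - v‖

theorem Submodule.add_eq_of_sub_mem_orthogonal {K : Submodule ℝ V} {v a b : V}
    (ha : a ∈ K) (hva : v - a ∈ Kᗮ) (hb : b ∈ Kᗮ) (hvb : v - b ∈ Kᗮᗮ) : a + b = v := by
  have h₁ : v - (a + b) ∈ Kᗮ := by
    simpa [sub_add_eq_sub_sub] using Kᗮ.sub_mem hva hb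
  have h₂ : v - (a + b) ∈ Kᗮᗮ := by
    simpa [sub_add_eq_sub_sub_swap] using Kᗮᗮ.sub_mem hvb (K.le_orthogonal_orthogonal ha)
  have h : v - (a + b) ∈ Kᗮ ⊓ Kᗮᗮ := ⟨h₁, h₂⟩
  rw [Kᗮ.inf_orthogonal_eq_bot, Submodule.mem_bot, sub_eq_zero] at h
  exact h.symm

namespace IsNearestPoint

variable {M : Submodule ℝ V} {c v x : V}

theorem sub_mem_orthogonal (h : IsNearestPoint (M : Set V) v x) : v - x ∈ Mᗮ := by
  have hinf : ‖v - x‖ = ⨅ w : M, ‖v - w‖ := by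
    have hbdd : BddBelow (Set.range fun w : M => ‖v - w‖) := ⟨0, by
      rintro _ ⟨w, rfl⟩
      exact norm_nonneg _⟩
    refine le_antisymm (le_ciInf fun w => ?_) (ciInf_le hbdd ⟨x, h.1⟩)
    rw [norm_sub_rev, norm_sub_rev v]
    exact h.2 w w.2
  rw [Submodule.mem_orthogonal']
  exact (M.norm_eq_iInf_iff_real_inner_eq_zero h.1).mp hinf

theorem sub_mem_orthogonal_of_affine (h : IsNearestPoint {y | y - c ∈ M} v x) :
    v - x ∈ Mᗮ := by
  have hlin : IsNearestPoint (M : Set V) (v - c) (x - c) := by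
    refine ⟨h.1, fun y hy => ?_⟩
    have hy' : y + c - c ∈ M := by simpa using hy
    simpa [sub_sub_eq_add_sub, add_sub_right_comm] using h.2 (y + c) hy'
  simpa using hlin.sub_mem_orthogonal

theorem eq_sub_of_isNearestPoint_orthogonal {r : V}
    (hx : IsNearestPoint {y | y - c ∈ M} v x) (hr : IsNearestPoint (Mᗮ : Set V) (v - c) r) :
    x = v - r := by
  have hsum : x - c + r = v - c :=
    M.add_eq_of_sub_mem_orthogonal hx.1 (by simpa using hx.sub_mem_orthogonal_of_affine) hr.1
      hr.sub_mem_orthogonal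
  rw [eq_sub_iff_add_eq]
  calc x + r = x - c + r + c := by abel
    _ = v := by rw [hsum, sub_add_cancel]

end IsNearestPoint

end NearestPoint

theorem parallel_von_neumann_is_dualization_of_psc_general
    {V : Type*} [NormedAddCommGroup V] [InnerProductSpace ℝ V]
    (J : ℕ) (M : Fin J → Submodule ℝ V) (ubar f : V) (τ : ℝ)
    -- the affine subspaces `K_j = M_j + {ū}`
    (K : Fin J → Set V) (hK : ∀ j, K j = {x : V | x - ubar ∈ M j})
    -- parallel von Neumann iterates
    (u : ℕ → V) (uj : ℕ → Fin J → V)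
    (hu0 : u 0 = f)
    (hujproj : ∀ (n : ℕ) (j : Fin J), uj (n + 1) j ∈ K j ∧
      ∀ k ∈ K j, ‖uj (n + 1) j - u n‖ ≤ ‖k - u n‖)
    (hurec : ∀ n : ℕ, u (n + 1) = (1 - τ * J) • u n + τ • ∑ j, uj (n + 1) j)
    -- PSC iterates for the dual problem, with `V_j = M_jᗮ` and zero initial guess
    (p : ℕ → V) (r : ℕ → Fin J → V)
    (hp0 : p 0 = 0)
    (hr : ∀ (n : ℕ) (j : Fin J), r (n + 1) j ∈ (M j)ᗮ ∧
      ∀ y ∈ (M j)ᗮ, ‖r (n + 1) j - ((f - ubar) - p n)‖ ≤ ‖y - ((f - ubar) - p n)‖)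
    (hprec : ∀ n : ℕ, p (n + 1) = p n + τ • ∑ j, r (n + 1) j) :
    ∀ n : ℕ, 1 ≤ n → u n = f - p n := by
  have hdual : ∀ n, u n = f - p n := by
    intro n
    induction n with
    | zero => simp [hu0, hp0]
    | succ n ih =>
      have huj : ∀ j, uj (n + 1) j = u n - r (n + 1) j := by
        intro j
        have hx : IsNearestPoint {y | y - ubar ∈ M j} (u n) (uj (n + 1) j) := hK j ▸ hujproj n j
        have hres : (f - ubar) - p n = u n - ubar := by rw [ih]; abel
        exact hx.eq_sub_of_isNearestPoint_orthogonal (hres ▸ hr n j)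
      rw [hurec, hprec, Finset.sum_congr rfl fun j _ => huj j, ih]
      simp only [Finset.sum_sub_distrib, Finset.sum_const, Finset.card_univ, Fintype.card_fin]
      module
  exact fun n _ => hdual n

/-- Theorem 4.4. The parallel von Neumann algorithm for projecting `f` onto
the intersection of the affine subspaces `K_j = M_j + {ū}` is a dualization of the parallel
subspace correction method applied to the dual problem
`min { ½‖p − f̄‖² : p ∈ V₁ + ⋯ + V_J }` with `V_j = M_jᗮ` and `f̄ = f − ū`: the two
sequences satisfy `u⁽ⁿ⁾ = f − p⁽ⁿ⁾` for all `n ≥ 1`. -/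
theorem parallel_von_neumann_is_dualization_of_psc
    {V : Type*} [NormedAddCommGroup V] [InnerProductSpace ℝ V] [FiniteDimensional ℝ V]
    (J : ℕ) (M : Fin J → Submodule ℝ V) (ubar f : V) (τ : ℝ) (hτ : 0 < τ)
    -- the affine subspaces `K_j = M_j + {ū}`
    (K : Fin J → Set V) (hK : ∀ j, K j = {x : V | x - ubar ∈ M j})
    -- parallel von Neumann iterates
    (u : ℕ → V) (uj : ℕ → Fin J → V)
    (hu0 : u 0 = f)
    (hujproj : ∀ (n : ℕ) (j : Fin J), uj (n + 1) j ∈ K j ∧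
      ∀ k ∈ K j, ‖uj (n + 1) j - u n‖ ≤ ‖k - u n‖)
    (hurec : ∀ n : ℕ, u (n + 1) = (1 - τ * J) • u n + τ • ∑ j, uj (n + 1) j)
    -- PSC iterates for the dual problem, with `V_j = M_jᗮ` and zero initial guess
    (p : ℕ → V) (r : ℕ → Fin J → V)
    (hp0 : p 0 = 0)
    (hr : ∀ (n : ℕ) (j : Fin J), r (n + 1) j ∈ (M j)ᗮ ∧
      ∀ y ∈ (M j)ᗮ, ‖r (n + 1) j - ((f - ubar) - p n)‖ ≤ ‖y - ((f - ubar) - p n)‖)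
    (hprec : ∀ n : ℕ, p (n + 1) = p n + τ • ∑ j, r (n + 1) j) :
    ∀ n : ℕ, 1 ≤ n → u n = f - p n :=
  parallel_von_neumann_is_dualization_of_psc_general J M ubar f τ K hK u uj hu0 hujproj hurec p r
    hp0 hr hprec
end

section
/- The parallel Dykstra algorithm is a dualization of the parallel subspace correction method applied to the dual problem min_{(p₁,…,p_J)∈V^J} ½‖Σ_j p_j − f‖² + Σ_j σ_{K_j}(p_j): for all n ≥ 1, u^{(n)} = f − Σ_{j=1}^J p_j^{(n)} and q_j^{(n)} = p_j^{(n)} for every 1 ≤ j ≤ J. -/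
open scoped RealInnerProductSpace

noncomputable section

/-!
The Dykstra correction `qⱼ` plays the role of the dual block `pⱼ`. Once `u⁽ⁿ⁾ = f - Σᵢ pᵢ⁽ⁿ⁾`
and `qⱼ⁽ⁿ⁾ = pⱼ⁽ⁿ⁾`, the `j`-th local PSC problem is `min ½‖pⱼ - w‖² + σ_{Kⱼ}(pⱼ)` with
`w = u⁽ⁿ⁾ + qⱼ⁽ⁿ⁾`, whose solution is `w - proj_{Kⱼ} w` (Moreau decomposition). Hence
`p̂ⱼ⁽ⁿ⁺¹⁾ = u⁽ⁿ⁾ + qⱼ⁽ⁿ⁾ - uⱼ⁽ⁿ⁺¹⁾`, the two relaxed updates agree, and the identities (true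
already at `n = 0`) propagate by induction.
-/

section Moreau

variable {V : Type*} [NormedAddCommGroup V] [InnerProductSpace ℝ V]

theorem inner_sub_le_zero_of_forall_norm_sub_le {K : Set V} (hK : Convex ℝ K) {w π : V}
    (hπ : π ∈ K) (hmin : ∀ k ∈ K, ‖π - w‖ ≤ ‖k - w‖) : ∀ k ∈ K, ⟪w - π, k - π⟫ ≤ 0 := by
  have : Nonempty K := ⟨⟨π, hπ⟩⟩
  rw [← norm_eq_iInf_iff_real_inner_le_zero hK hπ]
  refine le_antisymm (le_ciInf fun k => ?_) (ciInf_le ⟨0, ?_⟩ (⟨π, hπ⟩ : K))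
  · rw [norm_sub_rev w π, norm_sub_rev w (k : V)]
    exact hmin k k.2
  · rintro _ ⟨_, rfl⟩
    exact norm_nonneg _

theorem inner_le_suppFn_s8 {K : Set V} {k : V} (hk : k ∈ K) (v : V) :
    ((⟪v, k⟫ : ℝ) : EReal) ≤ suppFn K v :=
  le_iSup_of_le ⟨k, hk⟩ le_rfl

theorem suppFn_eq_inner_of_forall_inner_sub_le_zero {K : Set V} {π v : V} (hπ : π ∈ K)
    (hv : ∀ k ∈ K, ⟪v, k - π⟫ ≤ 0) : suppFn K v = ((⟪v, π⟫ : ℝ) : EReal) := by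
  refine le_antisymm (iSup_le fun k => ?_) (inner_le_suppFn_s8 hπ v)
  have hk := hv k k.2
  rw [inner_sub_right] at hk
  exact EReal.coe_le_coe_iff.mpr (by linarith)

/-- Moreau decomposition: the proximal point of `σ_K` at `w` is `w - proj_K w`. -/
theorem eq_sub_proj_of_isMinimizer_prox_suppFn {K : Set V} (hK : Convex ℝ K) {w π x : V}
    (hπ : π ∈ K) (hproj : ∀ k ∈ K, ‖π - w‖ ≤ ‖k - w‖)
    (hx : ∀ y : V, ((1 / 2 * ‖x - w‖ ^ 2 : ℝ) : EReal) + suppFn K x ≤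
      ((1 / 2 * ‖y - w‖ ^ 2 : ℝ) : EReal) + suppFn K y) :
    x = w - π := by
  have hsupp : suppFn K (w - π) = ((⟪w - π, π⟫ : ℝ) : EReal) :=
    suppFn_eq_inner_of_forall_inner_sub_le_zero hπ
      (inner_sub_le_zero_of_forall_norm_sub_le hK hπ hproj)
  have hexpand : 1 / 2 * ‖x - w‖ ^ 2 + ⟪x, π⟫ =
      1 / 2 * ‖π‖ ^ 2 + ⟪w - π, π⟫ + 1 / 2 * ‖x - (w - π)‖ ^ 2 := by
    have hsplit : x - w = (x - (w - π)) - π := by abel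
    rw [hsplit, norm_sub_sq_real, inner_sub_left, inner_sub_left, real_inner_self_eq_norm_sq]
    ring
  have hle : 1 / 2 * ‖x - w‖ ^ 2 + ⟪x, π⟫ ≤ 1 / 2 * ‖π‖ ^ 2 + ⟪w - π, π⟫ := by
    have hval := (add_le_add_right (inner_le_suppFn_s8 hπ x) _).trans (hx (w - π))
    rwa [hsupp, sub_sub_cancel_left, norm_neg, ← EReal.coe_add, ← EReal.coe_add,
      EReal.coe_le_coe_iff] at hval
  have hdist : ‖x - (w - π)‖ = 0 := by nlinarith [norm_nonneg (x - (w - π))]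
  exact sub_eq_zero.mp (norm_eq_zero.mp hdist)

end Moreau

theorem smul_add_smul_sum_eq_sub_sum_relaxed {V ι : Type*} [AddCommGroup V] [Module ℝ V] [Fintype ι]
    (τ : ℝ) (f : V) (p w : ι → V) :
    (1 - τ * Fintype.card ι) • (f - ∑ i, p i) + τ • ∑ i, w i =
      f - ∑ i, ((1 - τ) • p i + τ • (f - ∑ k, p k + p i - w i)) := by
  simp only [Finset.sum_add_distrib, Finset.sum_sub_distrib, ← Finset.smul_sum,
    Finset.sum_const, Finset.card_univ, ← Nat.cast_smul_eq_nsmul ℝ]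
  module

theorem parallel_dykstra_is_dualization_of_psc_general
    {V : Type*} [NormedAddCommGroup V] [InnerProductSpace ℝ V]
    (J : ℕ) (K : Fin J → Set V)
    (hK : ∀ j, (K j).Nonempty ∧ IsClosed (K j) ∧ Convex ℝ (K j))
    (f : V) (τ : ℝ)
    -- parallel Dykstra iterates
    (u : ℕ → V) (uj : ℕ → Fin J → V) (q : ℕ → Fin J → V)
    (hu0 : u 0 = f) (hq0 : ∀ j, q 0 j = 0)
    (hujproj : ∀ (n : ℕ) (j : Fin J), uj (n + 1) j ∈ K j ∧
      ∀ k ∈ K j, ‖uj (n + 1) j - (u n + q n j)‖ ≤ ‖k - (u n + q n j)‖)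
    (hqrec : ∀ (n : ℕ) (j : Fin J), q (n + 1) j = q n j + τ • (u n - uj (n + 1) j))
    (hurec : ∀ n : ℕ, u (n + 1) = (1 - τ * J) • u n + τ • ∑ j, uj (n + 1) j)
    -- PSC (relaxed block Jacobi) iterates for the dual problem, with zero initial guess
    (p : ℕ → Fin J → V) (phat : ℕ → Fin J → V)
    (hp0 : ∀ j, p 0 j = 0)
    (hphatmin : ∀ (n : ℕ) (j : Fin J), ∀ pj : V,
      ((1 / 2 * ‖phat (n + 1) j + (∑ i ∈ Finset.univ.filter (· ≠ j), p n i) - f‖ ^ 2 : ℝ) :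
          EReal) + suppFn (K j) (phat (n + 1) j) ≤
      ((1 / 2 * ‖pj + (∑ i ∈ Finset.univ.filter (· ≠ j), p n i) - f‖ ^ 2 : ℝ) : EReal) +
        suppFn (K j) pj)
    (hprec : ∀ (n : ℕ) (j : Fin J), p (n + 1) j = (1 - τ) • p n j + τ • phat (n + 1) j) :
    ∀ n : ℕ, 1 ≤ n → u n = f - ∑ j, p n j ∧ ∀ j, q n j = p n j := by
  have hphat : ∀ n j, u n = f - ∑ i, p n i → q n j = p n j →
      phat (n + 1) j = u n + q n j - uj (n + 1) j := by
    intro n j hu hq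
    refine eq_sub_proj_of_isMinimizer_prox_suppFn (hK j).2.2 (hujproj n j).1 (hujproj n j).2
      fun y => ?_
    have hshift : ∀ x : V, x + ∑ i ∈ Finset.univ.filter (· ≠ j), p n i - f = x - (u n + q n j) :=
      fun x => by
        rw [Finset.filter_ne', Finset.sum_erase_eq_sub (Finset.mem_univ j), hu, hq]
        abel
    simpa only [hshift] using hphatmin n j y
  suffices h : ∀ n, u n = f - ∑ j, p n j ∧ ∀ j, q n j = p n j from fun n _ => h n
  intro n
  induction n with
  | zero => simp [hu0, hq0, hp0]
  | succ n ih =>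
    obtain ⟨hu, hq⟩ := ih
    have hp : ∀ j, p (n + 1) j = (1 - τ) • p n j + τ • (u n + p n j - uj (n + 1) j) := fun j => by
      rw [hprec, hphat n j hu (hq j), hq]
    refine ⟨?_, fun j => ?_⟩
    · rw [hurec, Finset.sum_congr rfl fun j _ => hp j, hu]
      simpa only [Fintype.card_fin] using smul_add_smul_sum_eq_sub_sum_relaxed τ f (p n) (uj (n + 1))
    · rw [hqrec, hp, hq]
      module

/-- Theorem 4.5. The parallel Dykstra algorithm for projecting `f` onto the
intersection of closed convex sets `K₁, …, K_J` is a dualization of the parallel subspace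
correction (relaxed block Jacobi) method applied to the dual problem
`min ½‖Σⱼ pⱼ − f‖² + Σⱼ σ_{Kⱼ}(pⱼ)`: for all `n ≥ 1`, `u⁽ⁿ⁾ = f − Σⱼ pⱼ⁽ⁿ⁾` and
`qⱼ⁽ⁿ⁾ = pⱼ⁽ⁿ⁾` for every `j`. -/
theorem parallel_dykstra_is_dualization_of_psc
    {V : Type*} [NormedAddCommGroup V] [InnerProductSpace ℝ V] [FiniteDimensional ℝ V]
    (J : ℕ) (K : Fin J → Set V)
    (hK : ∀ j, (K j).Nonempty ∧ IsClosed (K j) ∧ Convex ℝ (K j))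
    (f : V) (τ : ℝ) (hτ : 0 < τ)
    -- parallel Dykstra iterates
    (u : ℕ → V) (uj : ℕ → Fin J → V) (q : ℕ → Fin J → V)
    (hu0 : u 0 = f) (hq0 : ∀ j, q 0 j = 0)
    (hujproj : ∀ (n : ℕ) (j : Fin J), uj (n + 1) j ∈ K j ∧
      ∀ k ∈ K j, ‖uj (n + 1) j - (u n + q n j)‖ ≤ ‖k - (u n + q n j)‖)
    (hqrec : ∀ (n : ℕ) (j : Fin J), q (n + 1) j = q n j + τ • (u n - uj (n + 1) j))
    (hurec : ∀ n : ℕ, u (n + 1) = (1 - τ * J) • u n + τ • ∑ j, uj (n + 1) j)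
    -- PSC (relaxed block Jacobi) iterates for the dual problem, with zero initial guess
    (p : ℕ → Fin J → V) (phat : ℕ → Fin J → V)
    (hp0 : ∀ j, p 0 j = 0)
    (hphatmin : ∀ (n : ℕ) (j : Fin J), ∀ pj : V,
      ((1 / 2 * ‖phat (n + 1) j + (∑ i ∈ Finset.univ.filter (· ≠ j), p n i) - f‖ ^ 2 : ℝ) :
          EReal) + suppFn (K j) (phat (n + 1) j) ≤
      ((1 / 2 * ‖pj + (∑ i ∈ Finset.univ.filter (· ≠ j), p n i) - f‖ ^ 2 : ℝ) : EReal) +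
        suppFn (K j) pj)
    (hprec : ∀ (n : ℕ) (j : Fin J), p (n + 1) j = (1 - τ) • p n j + τ • phat (n + 1) j) :
    ∀ n : ℕ, 1 ≤ n → u n = f - ∑ j, p n j ∧ ∀ j, q n j = p n j :=
  parallel_dykstra_is_dualization_of_psc_general J K hK f τ u uj q hu0 hq0 hujproj hqrec hurec p
    phat hp0 hphatmin hprec
end
end

section
/- The Peaceman–Rachford splitting algorithm for the linear equation (Σ_{j=1}^J A_j + αI)u = f is a dualization of the successive subspace correction method applied to the dual problem min_{(p₁,…,p_J)∈V^J} (1/(2α))‖Σ_j p_j − f‖² + ½ Σ_j ⟨A_j^{-1}p_j, p_j⟩: if the initial data satisfy u^{(−1,j)} = A_j^{-1} p_j^{(0)} for every j = 1, …, J, then p_j^{(n+1)} = A_j u^{(n,j)} for all n ≥ 0 and all j, and consequently u^{(n)} = (1/α)(f − Σ_{j=1}^J p_j^{(n)}) for all n ≥ 1, where u^{(n)} := u^{(n−1,J)}. -/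
/-!
Transporting the Peaceman–Rachford iterates by `pⱼ := Aⱼ uⱼ` turns each local solve
`(Aⱼ + αI) uⱼ = rⱼ` into `(αAⱼ⁻¹ + I) pⱼ = rⱼ`, so the transported iterates follow the block
Gauss–Seidel recursion of the dual problem. Since `⟪(αAⱼ⁻¹ + I) x, x⟫ ≥ ‖x‖²`, every local map
`αAⱼ⁻¹ + I` is injective, so this recursion determines its iterates from their initial values,
which agree by assumption. At the last block there are no later blocks, and the last local
equation reads `α u⁽ⁿ⁾ = f − Σⱼ pⱼ⁽ⁿ⁾`.
-/

open Finset Function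
open scoped RealInnerProductSpace

section LinearOrder

variable {ι : Type*} [Fintype ι] [LinearOrder ι] {j : ι}

theorem filter_lt_eq_erase_of_isTop (hj : IsTop j) : univ.filter (· < j) = univ.erase j := by
  ext i
  simp [lt_iff_le_and_ne, hj i]

theorem filter_gt_eq_empty_of_isTop (hj : IsTop j) : univ.filter (j < ·) = ∅ :=
  filter_false_of_mem fun i _ => not_lt.mpr (hj i)

end LinearOrder

section InnerProduct

variable {V : Type*} [NormedAddCommGroup V] [InnerProductSpace ℝ V]

theorem injective_smul_add_self_of_inner_nonneg {B : V →ₗ[ℝ] V} (hB : ∀ x, 0 ≤ ⟪B x, x⟫)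
    {α : ℝ} (hα : 0 ≤ α) : Injective fun x => α • B x + x := by
  change Injective ⇑(α • B + LinearMap.id : V →ₗ[ℝ] V)
  rw [← LinearMap.ker_eq_bot, LinearMap.ker_eq_bot']
  intro x hx
  have : α * ⟪B x, x⟫ + ‖x‖ ^ 2 = 0 := by
    simpa [inner_add_left, real_inner_smul_left, real_inner_self_eq_norm_sq] using
      congrArg (⟪·, x⟫) hx
  have : ‖x‖ ^ 2 ≤ 0 := by nlinarith [mul_nonneg hα (hB x)]
  simpa using this

theorem inner_rightInverse_apply_self_nonneg {A Ainv : V →ₗ[ℝ] V}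
    (hpos : ∀ x, x ≠ 0 → 0 < ⟪A x, x⟫) (hinv : ∀ x, A (Ainv x) = x) (x : V) :
    0 ≤ ⟪Ainv x, x⟫ := by
  rcases eq_or_ne (Ainv x) 0 with h | h
  · simp [h]
  · have := hpos _ h
    rw [hinv, real_inner_comm] at this
    exact this.le

end InnerProduct

section BlockIterations

variable {ι M R : Type*} [Fintype ι] [LinearOrder ι] [AddCommGroup M] [SMul R M]

def IsBlockGaussSeidel (T : ι → M → M) (f : M) (p : ℕ → ι → M) : Prop :=
  ∀ (n : ℕ) (j : ι), T j (p (n + 1) j) =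
    f - (∑ i ∈ univ.filter (· < j), p (n + 1) i) - ∑ i ∈ univ.filter (j < ·), p n i

def IsPeacemanRachford (A : ι → M → M) (α : R) (f : M) (u : ℕ → ι → M) : Prop :=
  ∀ (n : ℕ) (j : ι), A j (u (n + 1) j) + α • u (n + 1) j =
    f - (∑ i ∈ univ.filter (· < j), A i (u (n + 1) i)) - ∑ i ∈ univ.filter (j < ·), A i (u n i)

theorem IsBlockGaussSeidel.eq_of_injective {T : ι → M → M} (hT : ∀ j, Injective (T j)) {f : M}
    {p q : ℕ → ι → M} (hp : IsBlockGaussSeidel T f p) (hq : IsBlockGaussSeidel T f q)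
    (h₀ : p 0 = q 0) : p = q := by
  funext n
  induction n with
  | zero => exact h₀
  | succ n ih =>
    funext j
    induction j using WellFoundedLT.induction with
    | _ j ihj =>
      apply hT j
      rw [hp n j, hq n j, ih]
      congr 2
      exact sum_congr rfl fun i hi => ihj i (mem_filter.mp hi).2

theorem IsPeacemanRachford.isBlockGaussSeidel_apply {A Ainv : ι → M → M}
    (hinv : ∀ j x, Ainv j (A j x) = x) {α : R} {f : M} {u : ℕ → ι → M}
    (hu : IsPeacemanRachford A α f u) :
    IsBlockGaussSeidel (fun j x => α • Ainv j x + x) f fun n j => A j (u n j) := by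
  intro n j
  dsimp only
  rw [hinv, add_comm, hu n j]

theorem IsPeacemanRachford.smul_eq_of_isTop {A : ι → M → M} {α : R} {f : M} {u : ℕ → ι → M}
    (hu : IsPeacemanRachford A α f u) {j : ι} (hj : IsTop j) (n : ℕ) :
    α • u (n + 1) j = f - ∑ i, A i (u (n + 1) i) := by
  have h := hu n j
  rw [filter_gt_eq_empty_of_isTop hj, sum_empty, sub_zero] at h
  rw [← sum_erase_add _ _ (mem_univ j), ← filter_lt_eq_erase_of_isTop hj, sub_add_eq_sub_sub,
    ← h, add_sub_cancel_left]

end BlockIterations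

/-- Theorem 5.1. The Peaceman–Rachford splitting algorithm for the linear
equation `(Σⱼ Aⱼ + αI)u = f` is a dualization of the successive subspace correction (block
Gauss–Seidel) method applied to the dual problem
`min (1/(2α))‖Σⱼ pⱼ − f‖² + ½ Σⱼ ⟨Aⱼ⁻¹pⱼ, pⱼ⟩`: if `u⁽⁻¹'ʲ⁾ = Aⱼ⁻¹ pⱼ⁽⁰⁾` for all `j`,
then `pⱼ⁽ⁿ⁺¹⁾ = Aⱼ u⁽ⁿ'ʲ⁾` for all `n ≥ 0` and all `j`, and consequently
`u⁽ⁿ⁾ = (1/α)(f − Σⱼ pⱼ⁽ⁿ⁾)` for all `n ≥ 1`.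
Here `u n j` denotes `u⁽ⁿ⁻¹'ʲ⁺¹⁾` (so `u 0 j` are the initial values `u⁽⁻¹'ʲ⁺¹⁾` and
`u⁽ⁿ⁾ = u n (J−1)`), and `p n j` denotes `pⱼ⁽ⁿ⁾`. -/
theorem peaceman_rachford_is_dualization_of_ssc_linear
    {V : Type*} [NormedAddCommGroup V] [InnerProductSpace ℝ V]
    (J : ℕ) (hJ : 0 < J)
    (A Ainv : Fin J → V →ₗ[ℝ] V)
    -- the `Aⱼ` are symmetric and positive definite, with inverses `Ainv j`
    (hpos : ∀ (j : Fin J) (x : V), x ≠ 0 → 0 < ⟪A j x, x⟫)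
    (hinv₁ : ∀ (j : Fin J) (x : V), A j (Ainv j x) = x)
    (hinv₂ : ∀ (j : Fin J) (x : V), Ainv j (A j x) = x)
    (α : ℝ) (hα : 0 < α) (f : V)
    -- Peaceman–Rachford iterates: `u⁽ⁿ'ʲ⁾ = (Aⱼ + αI)⁻¹(f − Σ_{i<j} Aᵢu⁽ⁿ'ⁱ⁾ − Σ_{i>j} Aᵢu⁽ⁿ⁻¹'ⁱ⁾)`
    (u : ℕ → Fin J → V)
    (hu : ∀ (n : ℕ) (j : Fin J),
      A j (u (n + 1) j) + α • u (n + 1) j =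
        f - (∑ i ∈ Finset.univ.filter (· < j), A i (u (n + 1) i)) -
          ∑ i ∈ Finset.univ.filter (j < ·), A i (u n i))
    -- SSC iterates: `pⱼ⁽ⁿ⁺¹⁾ = (αAⱼ⁻¹ + I)⁻¹(f − Σ_{i<j} pᵢ⁽ⁿ⁺¹⁾ − Σ_{i>j} pᵢ⁽ⁿ⁾)`
    (p : ℕ → Fin J → V)
    (hp : ∀ (n : ℕ) (j : Fin J),
      α • Ainv j (p (n + 1) j) + p (n + 1) j =
        f - (∑ i ∈ Finset.univ.filter (· < j), p (n + 1) i) -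
          ∑ i ∈ Finset.univ.filter (j < ·), p n i)
    -- initial condition `u⁽⁻¹'ʲ⁾ = Aⱼ⁻¹ pⱼ⁽⁰⁾`
    (hinit : ∀ j : Fin J, u 0 j = Ainv j (p 0 j)) :
    (∀ (n : ℕ) (j : Fin J), p (n + 1) j = A j (u (n + 1) j)) ∧
      ∀ n : ℕ, 1 ≤ n → u n ⟨J - 1, by omega⟩ = (1 / α) • (f - ∑ j, p n j) := by
  have hdual : p = fun n j => A j (u n j) :=
    IsBlockGaussSeidel.eq_of_injective
      (fun j => injective_smul_add_self_of_inner_nonneg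
        (inner_rightInverse_apply_self_nonneg (hpos j) (hinv₁ j)) hα.le)
      hp (IsPeacemanRachford.isBlockGaussSeidel_apply hinv₂ hu) (funext fun j => by rw [hinit, hinv₁])
  refine ⟨fun n j => congrFun₂ hdual (n + 1) j, ?_⟩
  rintro (_ | n) hn
  · omega
  have hlast : IsTop (⟨J - 1, by omega⟩ : Fin J) := fun i =>
    Fin.le_def.mpr (Nat.le_sub_one_of_lt i.isLt)
  rw [hdual, ← IsPeacemanRachford.smul_eq_of_isTop hu hlast, smul_smul, one_div_mul_cancel hα.ne', one_smul]
end

section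
/- Define u_j^{(n)} for n ≥ 1 by the relation −B_jᵗλ^{(n)} ∈ ∂F_j(u_j^{(n)}). Then the dualization-based ADMM is a dualization of the generalized Douglas–Rachford splitting algorithm applied to the dual problem min_{p∈V_J} (1/(2β))‖p‖² + ⟨g,p⟩ + Σ_{j=1}^{J−1} F_j*(−B_jᵗp): if v_j^{(0)} = q_j^{(0)} for all j and λ^{(0)} = p^{(0)}, then λ̂^{(n+1,j)} = p̂^{(n+1,j)} for all n ≥ 0 and 0 ≤ j ≤ J−1, and v_j^{(n)} = q_j^{(n)} for all j and λ^{(n)} = p^{(n)} for all n ≥ 1. -/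
/-! The `j`-th Douglas–Rachford subproblem is the Fenchel dual of the `j`-th ADMM subproblem.
If `û` minimizes `F(u) + ⟨λ̂, Bu⟩ + (β/2)‖Bu − v‖²`, then first-order optimality gives
`−Bᵗy ∈ ∂F(û)` for `y = λ̂ + β(Bû − v)`. By the Fenchel–Young inequality the dual objective
`(1/(2β))‖p − λ̂‖² + ⟨v, p⟩ + F*(−Bᵗp)` lies above a quadratic with vertex `y` and curvature
`1/(2β)`, and by the Fenchel–Young equality it touches that quadratic at `y`; so its unique
minimizer is `y`, which is the ADMM multiplier update. Induction over the inner index and then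
over `n` propagates `λ̂ = p̂`, after which `q + (τ/β)(p̂ʲ − p̂ʲ⁻¹) = q + τ(Bû − v)` is the ADMM
`v`-update. -/

open scoped RealInnerProductSpace

noncomputable section

def subdiff {E : Type*} [NormedAddCommGroup E] [InnerProductSpace ℝ E]
    (F : E → EReal) (u : E) : Set E :=
  {x | ∀ v : E, F u + ((⟪x, v - u⟫ : ℝ) : EReal) ≤ F v}

theorem nonpos_of_forall_le_mul {x c : ℝ} (h : ∀ t : ℝ, 0 < t → t ≤ 1 → x ≤ c * t) : x ≤ 0 := by
  have hlim : Filter.Tendsto (fun t : ℝ => c * t) (nhdsWithin 0 (Set.Ioi 0)) (nhds 0) := by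
    simpa using
      ((continuous_const_mul c).tendsto' (0 : ℝ) (c * 0) rfl).mono_left nhdsWithin_le_nhds
  refine ge_of_tendsto hlim ?_
  filter_upwards [Ioo_mem_nhdsGT one_pos] with t ht using h t ht.1 ht.2.le

theorem ne_top_of_forall_add_coe_le {E : Type*} {F : E → EReal} {ψ : E → ℝ} {u : E}
    (hF : ∃ u₀, F u₀ ≠ ⊤) (hmin : ∀ x, F u + (ψ u : EReal) ≤ F x + ψ x) : F u ≠ ⊤ := by
  obtain ⟨u₀, hu₀⟩ := hF
  intro h
  have h₀ := hmin u₀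
  rw [h, EReal.top_add_coe, top_le_iff] at h₀
  exact (EReal.add_lt_top hu₀ (EReal.coe_ne_top _)).ne h₀

theorem ProperFn.exists_eq_coe {E : Type*} {F : E → EReal} (hF : ProperFn F) {u : E}
    (hu : F u ≠ ⊤) : ∃ a : ℝ, F u = a :=
  ⟨_, (EReal.coe_toReal hu (hF.2 u)).symm⟩

section Conjugate

variable {E : Type*} [NormedAddCommGroup E] [InnerProductSpace ℝ E] {F : E → EReal}

theorem inner_sub_le_fenchelConj (F : E → EReal) (x u : E) :
    ((⟪x, u⟫ : ℝ) : EReal) - F u ≤ fenchelConj F x :=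
  le_iSup (fun u => ((⟪x, u⟫ : ℝ) : EReal) - F u) u

theorem fenchelConj_eq_of_mem_subdiff {x u : E} (hx : x ∈ subdiff F u) :
    fenchelConj F x = ((⟪x, u⟫ : ℝ) : EReal) - F u := by
  refine le_antisymm (iSup_le fun v => ?_) (inner_sub_le_fenchelConj F x u)
  have hv := hx v
  rw [inner_sub_right] at hv
  generalize F u = a at hv ⊢
  generalize F v = b at hv ⊢
  induction a using EReal.rec with
  | bot => simp
  | top =>
    rw [EReal.top_add_coe, top_le_iff] at hv
    simp [hv]
  | coe a =>
    induction b using EReal.rec with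
    | bot => exact absurd (le_bot_iff.1 hv) (by rw [← EReal.coe_add]; exact EReal.coe_ne_bot _)
    | top => simp
    | coe b =>
      rw [← EReal.coe_add, EReal.coe_le_coe_iff] at hv
      rw [← EReal.coe_sub, ← EReal.coe_sub, EReal.coe_le_coe_iff]
      linarith

theorem neg_mem_subdiff_of_forall_add_coe_le (hF : ProperFn F) (hFc : ConvexFn F)
    {ψ : E → ℝ} {s u : E} (hψ : ∀ d, ∃ c, ∀ t, ψ (u + t • d) ≤ ψ u + t * ⟪s, d⟫ + c * t ^ 2)
    (hmin : ∀ x, F u + (ψ u : EReal) ≤ F x + ψ x) : -s ∈ subdiff F u := by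
  intro v
  by_cases hv : F v = ⊤
  · rw [hv]; exact le_top
  obtain ⟨a, ha⟩ := hF.exists_eq_coe (ne_top_of_forall_add_coe_le hF.1 hmin)
  obtain ⟨b, hb⟩ := hF.exists_eq_coe hv
  obtain ⟨c, hc⟩ := hψ (v - u)
  suffices a - ⟪s, v - u⟫ - b ≤ 0 by
    rw [ha, hb, ← EReal.coe_add, EReal.coe_le_coe_iff, inner_neg_left]; linarith
  -- minimality at the points of the segment from `u` to `v`, convexity along it, divide by `t`
  refine nonpos_of_forall_le_mul (c := c) fun t ht ht₁ => ?_
  have hdescent : a + ψ u ≤ (1 - t) * a + t * b + ψ (u + t • (v - u)) := by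
    have hconv := hFc u v t ht.le ht₁
    rw [show (1 - t) • u + t • v = u + t • (v - u) by module] at hconv
    have h := (hmin (u + t • (v - u))).trans (add_le_add_left hconv _)
    rw [ha, hb] at h
    exact_mod_cast h
  refine le_of_mul_le_mul_left ?_ ht
  nlinarith [hc t]

end Conjugate

section Quadratic

variable {Z : Type*} [NormedAddCommGroup Z] [InnerProductSpace ℝ Z]

theorem inner_add_mul_norm_sq_add_smul (P z w e : Z) (β t : ℝ) :
    ⟪P, z + t • e⟫ + β / 2 * ‖z + t • e - w‖ ^ 2 =
      ⟪P, z⟫ + β / 2 * ‖z - w‖ ^ 2 + t * ⟪P + β • (z - w), e⟫ + β / 2 * ‖e‖ ^ 2 * t ^ 2 := by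
  rw [show z + t • e - w = (z - w) + t • e by abel, norm_add_sq_real, norm_smul,
    inner_add_right, inner_add_left, real_inner_smul_right, real_inner_smul_right,
    real_inner_smul_left, mul_pow, Real.norm_eq_abs, sq_abs]
  ring

theorem one_div_mul_norm_sub_sq_sub_inner {β : ℝ} (hβ : β ≠ 0) {P a y : Z} (hy : y = P + β • a)
    (x : Z) :
    1 / (2 * β) * ‖x - P‖ ^ 2 - ⟪a, x⟫ =
      1 / (2 * β) * ‖y - P‖ ^ 2 - ⟪a, y⟫ + 1 / (2 * β) * ‖x - y‖ ^ 2 := by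
  rw [show x - P = (x - y) + β • a by rw [hy]; abel, show y - P = β • a by rw [hy]; abel,
    norm_add_sq_real, norm_smul, real_inner_smul_right, mul_pow, Real.norm_eq_abs, sq_abs,
    show x = (x - y) + y by abel, inner_add_right, real_inner_comm a, sub_add_cancel]
  field_simp
  ring

end Quadratic

theorem eq_of_forall_le_of_coe_add_norm_sq_le {Z : Type*} [NormedAddCommGroup Z]
    {Φ : Z → EReal} {y m : Z} {c κ : ℝ} (hκ : 0 < κ) (hm : ∀ x, Φ m ≤ Φ x) (hy : Φ y ≤ c)
    (hΦ : ∀ x, ((c + κ * ‖x - y‖ ^ 2 : ℝ) : EReal) ≤ Φ x) :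
    m = y := by
  have h := EReal.coe_le_coe_iff.1 ((hΦ m).trans ((hm y).trans hy))
  have hsq : ‖m - y‖ ^ 2 = 0 := le_antisymm (by nlinarith) (by positivity)
  simpa [sub_eq_zero] using hsq

theorem dr_minimizer_eq_admm_multiplier_update {V Z : Type*}
    [NormedAddCommGroup V] [InnerProductSpace ℝ V] [NormedAddCommGroup Z] [InnerProductSpace ℝ Z]
    {F : V → EReal} (hF : ProperFn F) (hFc : ConvexFn F) {B : V →ₗ[ℝ] Z} {Bt : Z →ₗ[ℝ] V}
    (hadj : ∀ x z, ⟪B x, z⟫ = ⟪x, Bt z⟫) {β : ℝ} (hβ : 0 < β) {P w ph : Z} {uh : V}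
    (hmin : ∀ x : V,
      F uh + ((⟪P, B uh⟫ + β / 2 * ‖B uh - w‖ ^ 2 : ℝ) : EReal) ≤
        F x + ((⟪P, B x⟫ + β / 2 * ‖B x - w‖ ^ 2 : ℝ) : EReal))
    (hpmin : ∀ x : Z,
      ((1 / (2 * β) * ‖ph - P‖ ^ 2 + ⟪w, ph⟫ : ℝ) : EReal) + fenchelConj F (-(Bt ph)) ≤
        ((1 / (2 * β) * ‖x - P‖ ^ 2 + ⟪w, x⟫ : ℝ) : EReal) + fenchelConj F (-(Bt x))) :
    ph = P + β • (B uh - w) := by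
  set y := P + β • (B uh - w) with hy
  have hsub : -(Bt y) ∈ subdiff F uh := by
    refine neg_mem_subdiff_of_forall_add_coe_le
      (ψ := fun x => ⟪P, B x⟫ + β / 2 * ‖B x - w‖ ^ 2) hF hFc
      (fun d => ⟨β / 2 * ‖B d‖ ^ 2, fun t => le_of_eq ?_⟩) hmin
    rw [map_add, map_smul, inner_add_mul_norm_sq_add_smul, real_inner_comm d (Bt y), ← hadj,
      real_inner_comm y (B d)]
  obtain ⟨a, ha⟩ := hF.exists_eq_coe <|
    ne_top_of_forall_add_coe_le (ψ := fun x => ⟪P, B x⟫ + β / 2 * ‖B x - w‖ ^ 2) hF.1 hmin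
  have hinner : ∀ x, ⟪-(Bt x), uh⟫ = -⟪B uh, x⟫ := fun x => by
    rw [inner_neg_left, real_inner_comm, ← hadj]
  have hsq := one_div_mul_norm_sub_sq_sub_inner hβ.ne' hy
  refine eq_of_forall_le_of_coe_add_norm_sq_le
    (Φ := fun x => ((1 / (2 * β) * ‖x - P‖ ^ 2 + ⟪w, x⟫ : ℝ) : EReal) + fenchelConj F (-(Bt x)))
    (c := 1 / (2 * β) * ‖y - P‖ ^ 2 + ⟪w, y⟫ - ⟪B uh, y⟫ - a) (κ := 1 / (2 * β)) (by positivity)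
    hpmin ?_ fun x => ?_
  · rw [fenchelConj_eq_of_mem_subdiff hsub, ha, hinner, ← EReal.coe_sub, ← EReal.coe_add]
    exact le_of_eq (congrArg _ (by ring))
  · refine le_trans (le_of_eq ?_) (add_le_add le_rfl (inner_sub_le_fenchelConj F _ uh))
    rw [ha, hinner, ← EReal.coe_sub, ← EReal.coe_add]
    have hx := hsq x
    rw [inner_sub_left, inner_sub_left] at hx
    congr 1
    linarith

theorem dualization_based_admm_is_dualization_of_generalized_dr_general
    (Jm : ℕ) {Z : Type*}
    [NormedAddCommGroup Z] [InnerProductSpace ℝ Z]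
    (Vb : Fin Jm → Type*)
    [∀ j, NormedAddCommGroup (Vb j)] [∀ j, InnerProductSpace ℝ (Vb j)]
    (F : ∀ j : Fin Jm, Vb j → EReal)
    (hF : ∀ j, ProperFn (F j) ∧ ConvexFn (F j) ∧ LowerSemicontinuous (F j))
    (B : ∀ j : Fin Jm, Vb j →ₗ[ℝ] Z) (Bt : ∀ j : Fin Jm, Z →ₗ[ℝ] Vb j)
    (hadj : ∀ (j : Fin Jm) (x : Vb j) (z : Z), ⟪B j x, z⟫ = ⟪x, Bt j z⟫)
    (β τ : ℝ) (hβ : 0 < β)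
    -- dualization-based ADMM iterates; `lamhat (n+1) j` is `λ̂⁽ⁿ⁺¹'ʲ⁾`, `0 ≤ j ≤ Jm`
    (v : ℕ → Fin Jm → Z) (lam : ℕ → Z) (lamhat : ℕ → ℕ → Z)
    (uhat : ℕ → ∀ j : Fin Jm, Vb j)
    (hlamhat0 : ∀ n : ℕ, lamhat (n + 1) 0 = lam n)
    (huhatmin : ∀ (n : ℕ) (j : Fin Jm), ∀ x : Vb j,
      F j (uhat (n + 1) j) + ((⟪lamhat (n + 1) j.1, B j (uhat (n + 1) j)⟫ +
          β / 2 * ‖B j (uhat (n + 1) j) - v n j‖ ^ 2 : ℝ) : EReal) ≤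
        F j x + ((⟪lamhat (n + 1) j.1, B j x⟫ + β / 2 * ‖B j x - v n j‖ ^ 2 : ℝ) : EReal))
    (hvrec : ∀ (n : ℕ) (j : Fin Jm),
      v (n + 1) j = (1 - τ) • v n j + τ • B j (uhat (n + 1) j))
    (hlamhatrec : ∀ (n : ℕ) (j : Fin Jm),
      lamhat (n + 1) (j.1 + 1) = lamhat (n + 1) j.1 + β • (B j (uhat (n + 1) j) - v n j))
    (hlamrec : ∀ n : ℕ, lam (n + 1) = (1 - τ) • lam n + τ • lamhat (n + 1) Jm)
    -- generalized Douglas–Rachford iterates for the dual problem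
    (p : ℕ → Z) (phat : ℕ → ℕ → Z) (q : ℕ → Fin Jm → Z)
    (hphat0 : ∀ n : ℕ, phat (n + 1) 0 = p n)
    (hphatmin : ∀ (n : ℕ) (j : Fin Jm), ∀ x : Z,
      ((1 / (2 * β) * ‖phat (n + 1) (j.1 + 1) - phat (n + 1) j.1‖ ^ 2 +
          ⟪q n j, phat (n + 1) (j.1 + 1)⟫ : ℝ) : EReal) +
        fenchelConj (F j) (-(Bt j (phat (n + 1) (j.1 + 1)))) ≤
      ((1 / (2 * β) * ‖x - phat (n + 1) j.1‖ ^ 2 + ⟪q n j, x⟫ : ℝ) : EReal) +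
        fenchelConj (F j) (-(Bt j x)))
    (hqrec : ∀ (n : ℕ) (j : Fin Jm),
      q (n + 1) j = q n j + (τ / β) • (phat (n + 1) (j.1 + 1) - phat (n + 1) j.1))
    (hprec : ∀ n : ℕ, p (n + 1) = (1 - τ) • p n + τ • phat (n + 1) Jm)
    -- initial conditions
    (hinitv : ∀ j, v 0 j = q 0 j) (hinitlam : lam 0 = p 0) :
    (∀ (n : ℕ) (j : ℕ), j ≤ Jm → lamhat (n + 1) j = phat (n + 1) j) ∧
      ∀ n : ℕ, 1 ≤ n → (∀ j, v n j = q n j) ∧ lam n = p n := by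
  have sweep : ∀ n, (∀ j, v n j = q n j) → lam n = p n →
      ∀ k ≤ Jm, lamhat (n + 1) k = phat (n + 1) k := by
    intro n hv hlam k hk
    induction k with
    | zero => rw [hlamhat0, hphat0, hlam]
    | succ k ih =>
      have hk' : k < Jm := hk
      have hmin := huhatmin n ⟨k, hk'⟩
      have hpmin := hphatmin n ⟨k, hk'⟩
      rw [ih hk'.le] at hmin
      rw [← hv] at hpmin
      rw [hlamhatrec n ⟨k, hk'⟩, ih hk'.le,
        dr_minimizer_eq_admm_multiplier_update (hF _).1 (hF _).2.1 (hadj _) hβ hmin hpmin]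
  have step : ∀ n, (∀ j, v n j = q n j) → lam n = p n →
      (∀ j, v (n + 1) j = q (n + 1) j) ∧ lam (n + 1) = p (n + 1) := by
    intro n hv hlam
    have hsweep := sweep n hv hlam
    refine ⟨fun j => ?_, by rw [hlamrec, hprec, hlam, hsweep Jm le_rfl]⟩
    have hdiff : phat (n + 1) (j.1 + 1) - phat (n + 1) j.1 =
        β • (B j (uhat (n + 1) j) - v n j) := by
      rw [← hsweep _ j.2, ← hsweep _ j.2.le, hlamhatrec]
      abel
    rw [hvrec, hqrec, hdiff, ← hv j, smul_smul, div_mul_cancel₀ _ hβ.ne']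
    module
  have hagree : ∀ n, (∀ j, v n j = q n j) ∧ lam n = p n := fun n => by
    induction n with
    | zero => exact ⟨hinitv, hinitlam⟩
    | succ n ih => exact step n ih.1 ih.2
  exact ⟨fun n k => sweep n (hagree n).1 (hagree n).2 k, fun n _ => hagree n⟩

/-- Theorem 6.2. The dualization-based ADMM for the `J`-block constrained
problem with quadratic last block is a dualization of the generalized Douglas–Rachford
splitting algorithm applied to the dual problem
`min (1/(2β))‖p‖² + ⟨g,p⟩ + Σⱼ Fⱼ*(−Bⱼᵗp)`: if `vⱼ⁽⁰⁾ = qⱼ⁽⁰⁾` and `λ⁽⁰⁾ = p⁽⁰⁾`, then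
`λ̂⁽ⁿ⁺¹'ʲ⁾ = p̂⁽ⁿ⁺¹'ʲ⁾` for all `n ≥ 0` and `0 ≤ j ≤ J−1`, while `vⱼ⁽ⁿ⁾ = qⱼ⁽ⁿ⁾` and
`λ⁽ⁿ⁾ = p⁽ⁿ⁾` for all `n ≥ 1`. Here `Jm` denotes the number `J−1` of nonquadratic blocks,
`Z` denotes the last space `V_J`, and the sequence `u` is defined by the dualization relation
`−Bⱼᵗλ⁽ⁿ⁾ ∈ ∂Fⱼ(uⱼ⁽ⁿ⁾)`. -/
theorem dualization_based_admm_is_dualization_of_generalized_dr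
    (Jm : ℕ) {Z : Type*}
    [NormedAddCommGroup Z] [InnerProductSpace ℝ Z] [FiniteDimensional ℝ Z]
    (Vb : Fin Jm → Type*)
    [∀ j, NormedAddCommGroup (Vb j)] [∀ j, InnerProductSpace ℝ (Vb j)]
    [∀ j, FiniteDimensional ℝ (Vb j)]
    (F : ∀ j : Fin Jm, Vb j → EReal)
    (hF : ∀ j, ProperFn (F j) ∧ ConvexFn (F j) ∧ LowerSemicontinuous (F j))
    (B : ∀ j : Fin Jm, Vb j →ₗ[ℝ] Z) (Bt : ∀ j : Fin Jm, Z →ₗ[ℝ] Vb j)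
    (hadj : ∀ (j : Fin Jm) (x : Vb j) (z : Z), ⟪B j x, z⟫ = ⟪x, Bt j z⟫)
    (g : Z) (β τ : ℝ) (hβ : 0 < β) (hτ : 0 < τ)
    -- dualization-based ADMM iterates; `lamhat (n+1) j` is `λ̂⁽ⁿ⁺¹'ʲ⁾`, `0 ≤ j ≤ Jm`
    (v : ℕ → Fin Jm → Z) (lam : ℕ → Z) (lamhat : ℕ → ℕ → Z)
    (uhat : ℕ → ∀ j : Fin Jm, Vb j)
    (hlamhat0 : ∀ n : ℕ, lamhat (n + 1) 0 = lam n)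
    (huhatmin : ∀ (n : ℕ) (j : Fin Jm), ∀ x : Vb j,
      F j (uhat (n + 1) j) + ((⟪lamhat (n + 1) j.1, B j (uhat (n + 1) j)⟫ +
          β / 2 * ‖B j (uhat (n + 1) j) - v n j‖ ^ 2 : ℝ) : EReal) ≤
        F j x + ((⟪lamhat (n + 1) j.1, B j x⟫ + β / 2 * ‖B j x - v n j‖ ^ 2 : ℝ) : EReal))
    (hvrec : ∀ (n : ℕ) (j : Fin Jm),
      v (n + 1) j = (1 - τ) • v n j + τ • B j (uhat (n + 1) j))
    (hlamhatrec : ∀ (n : ℕ) (j : Fin Jm),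
      lamhat (n + 1) (j.1 + 1) = lamhat (n + 1) j.1 + β • (B j (uhat (n + 1) j) - v n j))
    (hlamrec : ∀ n : ℕ, lam (n + 1) = (1 - τ) • lam n + τ • lamhat (n + 1) Jm)
    -- the primal sequence defined by the dualization relation
    (u : ℕ → ∀ j : Fin Jm, Vb j)
    (hu : ∀ n : ℕ, 1 ≤ n → ∀ j : Fin Jm, -(Bt j (lam n)) ∈ subdiff (F j) (u n j))
    -- generalized Douglas–Rachford iterates for the dual problem
    (p : ℕ → Z) (phat : ℕ → ℕ → Z) (q : ℕ → Fin Jm → Z)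
    (hphat0 : ∀ n : ℕ, phat (n + 1) 0 = p n)
    (hphatmin : ∀ (n : ℕ) (j : Fin Jm), ∀ x : Z,
      ((1 / (2 * β) * ‖phat (n + 1) (j.1 + 1) - phat (n + 1) j.1‖ ^ 2 +
          ⟪q n j, phat (n + 1) (j.1 + 1)⟫ : ℝ) : EReal) +
        fenchelConj (F j) (-(Bt j (phat (n + 1) (j.1 + 1)))) ≤
      ((1 / (2 * β) * ‖x - phat (n + 1) j.1‖ ^ 2 + ⟪q n j, x⟫ : ℝ) : EReal) +
        fenchelConj (F j) (-(Bt j x)))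
    (hqrec : ∀ (n : ℕ) (j : Fin Jm),
      q (n + 1) j = q n j + (τ / β) • (phat (n + 1) (j.1 + 1) - phat (n + 1) j.1))
    (hprec : ∀ n : ℕ, p (n + 1) = (1 - τ) • p n + τ • phat (n + 1) Jm)
    -- initial conditions
    (hinitv : ∀ j, v 0 j = q 0 j) (hinitlam : lam 0 = p 0) :
    (∀ (n : ℕ) (j : ℕ), j ≤ Jm → lamhat (n + 1) j = phat (n + 1) j) ∧
      ∀ n : ℕ, 1 ≤ n → (∀ j, v n j = q n j) ∧ lam n = p n :=
  dualization_based_admm_is_dualization_of_generalized_dr_general Jm Vb F hF B Bt hadj β τ hβ v lam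
    lamhat uhat hlamhat0 huhatmin hvrec hlamhatrec hlamrec p phat q hphat0 hphatmin hqrec hprec
    hinitv hinitlam
end
end

section
/- If u^{(0)} = ½(v₁^{(0)} + v₂^{(0)}), then u^{(n)} = ½(v₁^{(n)} + v₂^{(n)}) for all n ≥ 0, and the sequence v^{(n)} := 2u^{(n)} − v₁^{(n)} satisfies, for all n ≥ 0: u^{(n+1/2)} = prox_{Ḡ₁}(v^{(n)}), u^{(n+1)} = prox_{Ḡ₂}(2u^{(n+1/2)} − v^{(n)}), and v^{(n+1)} = (2 prox_{Ḡ₂} − I)(2 prox_{Ḡ₁} − I)(v^{(n)}). In other words, the generalized Peaceman–Rachford splitting algorithm applied to two convex functions reduces to the classical Peaceman–Rachford splitting for Ḡ₁ + Ḡ₂. -/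
/-!
Completing the square: for `z = 2c - w`,
`½‖x - z‖² + ½‖x‖² = ‖x - c‖² + ⟪w, x⟫ - (‖c‖² - ½‖z‖²)`,
so each half-step of the generalized scheme, a minimization of `‖x - c‖² + ⟪w, x⟫ + G x`, minimizes
the objective of `prox_{Ḡ}` at `2c - w`, and uniqueness of the proximal point identifies them.
The invariant `u = ½(v₁ + v₂)` makes `2u⁽ⁿ⁾ - v₁⁽ⁿ⁾ = v₂⁽ⁿ⁾`, which turns the two half-steps into
the two reflections of the classical Peaceman–Rachford iteration.
-/

open scoped RealInnerProductSpace

noncomputable section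

lemma EReal.coe_sub_add_le_coe_sub_add {a b : ℝ} (k : ℝ) {p q : EReal}
    (h : (a : EReal) + p ≤ (b : EReal) + q) :
    ((a - k : ℝ) : EReal) + p ≤ ((b - k : ℝ) : EReal) + q := by
  have hsub : ∀ r : ℝ, ((r - k : ℝ) : EReal) = (r : EReal) + ((-k : ℝ) : EReal) := fun r => by
    rw [sub_eq_add_neg, EReal.coe_add]
  rw [hsub, hsub, add_right_comm, add_right_comm (b : EReal)]
  exact add_le_add_left h _

section CompletingSquare

variable {V : Type*} [NormedAddCommGroup V] [InnerProductSpace ℝ V]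

lemma half_norm_sub_sq_add_half_norm_sq_eq (c w x : V) :
    1 / 2 * ‖x - ((2 : ℝ) • c - w)‖ ^ 2 + 1 / 2 * ‖x‖ ^ 2 =
      ‖x - c‖ ^ 2 + ⟪w, x⟫ - (‖c‖ ^ 2 - 1 / 2 * ‖(2 : ℝ) • c - w‖ ^ 2) := by
  rw [norm_sub_sq_real x, norm_sub_sq_real x c, inner_sub_right, real_inner_smul_right,
    real_inner_comm w x]
  ring

lemma prox_objective_le_of_linearized_objective_le (G : V → EReal) {c w y : V}
    (h : ∀ x : V, ((‖y - c‖ ^ 2 + ⟪w, y⟫ : ℝ) : EReal) + G y ≤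
      ((‖x - c‖ ^ 2 + ⟪w, x⟫ : ℝ) : EReal) + G x) (x : V) :
    ((1 / 2 * ‖y - ((2 : ℝ) • c - w)‖ ^ 2 + 1 / 2 * ‖y‖ ^ 2 : ℝ) : EReal) + G y ≤
      ((1 / 2 * ‖x - ((2 : ℝ) • c - w)‖ ^ 2 + 1 / 2 * ‖x‖ ^ 2 : ℝ) : EReal) + G x := by
  rw [half_norm_sub_sq_add_half_norm_sq_eq, half_norm_sub_sq_add_half_norm_sq_eq]
  exact EReal.coe_sub_add_le_coe_sub_add _ (h x)

end CompletingSquare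

lemma midpoint_invariant {V : Type*} [AddCommGroup V] [Module ℝ V] {u uh v₁ v₂ : ℕ → V}
    (hv₁rec : ∀ n, v₁ (n + 1) = v₁ n + (2 : ℝ) • (uh n - u n))
    (hv₂rec : ∀ n, v₂ (n + 1) = v₂ n + (2 : ℝ) • (u (n + 1) - uh n))
    (hinit : u 0 = (1 / 2 : ℝ) • (v₁ 0 + v₂ 0)) (n : ℕ) :
    u n = (1 / 2 : ℝ) • (v₁ n + v₂ n) := by
  induction n with
  | zero => exact hinit
  | succ n ih => rw [hv₁rec, hv₂rec, ih]; module

theorem generalized_pr_two_blocks_is_classical_pr_general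
    {V : Type*} [NormedAddCommGroup V] [InnerProductSpace ℝ V]
    (G₁ G₂ : V → EReal)
    -- the proximal operators of `Ḡ₁` and `Ḡ₂`
    (prox₁ prox₂ : V → V)
    (hprox₁ : ∀ z : V,
      (∀ x : V, ((1 / 2 * ‖prox₁ z - z‖ ^ 2 + 1 / 2 * ‖prox₁ z‖ ^ 2 : ℝ) : EReal) +
          G₁ (prox₁ z) ≤
        ((1 / 2 * ‖x - z‖ ^ 2 + 1 / 2 * ‖x‖ ^ 2 : ℝ) : EReal) + G₁ x) ∧
      ∀ y : V, (∀ x : V, ((1 / 2 * ‖y - z‖ ^ 2 + 1 / 2 * ‖y‖ ^ 2 : ℝ) : EReal) + G₁ y ≤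
          ((1 / 2 * ‖x - z‖ ^ 2 + 1 / 2 * ‖x‖ ^ 2 : ℝ) : EReal) + G₁ x) → y = prox₁ z)
    (hprox₂ : ∀ z : V,
      (∀ x : V, ((1 / 2 * ‖prox₂ z - z‖ ^ 2 + 1 / 2 * ‖prox₂ z‖ ^ 2 : ℝ) : EReal) +
          G₂ (prox₂ z) ≤
        ((1 / 2 * ‖x - z‖ ^ 2 + 1 / 2 * ‖x‖ ^ 2 : ℝ) : EReal) + G₂ x) ∧
      ∀ y : V, (∀ x : V, ((1 / 2 * ‖y - z‖ ^ 2 + 1 / 2 * ‖y‖ ^ 2 : ℝ) : EReal) + G₂ y ≤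
          ((1 / 2 * ‖x - z‖ ^ 2 + 1 / 2 * ‖x‖ ^ 2 : ℝ) : EReal) + G₂ x) → y = prox₂ z)
    -- generalized Peaceman–Rachford iterates: `uh n` is `u⁽ⁿ⁺¹ᐟ²⁾`
    (u uh v₁ v₂ : ℕ → V)
    (huhmin : ∀ n : ℕ, ∀ x : V,
      ((‖uh n - u n‖ ^ 2 + ⟪v₁ n, uh n⟫ : ℝ) : EReal) + G₁ (uh n) ≤
        ((‖x - u n‖ ^ 2 + ⟪v₁ n, x⟫ : ℝ) : EReal) + G₁ x)
    (hv₁rec : ∀ n : ℕ, v₁ (n + 1) = v₁ n + (2 : ℝ) • (uh n - u n))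
    (humin : ∀ n : ℕ, ∀ x : V,
      ((‖u (n + 1) - uh n‖ ^ 2 + ⟪v₂ n, u (n + 1)⟫ : ℝ) : EReal) + G₂ (u (n + 1)) ≤
        ((‖x - uh n‖ ^ 2 + ⟪v₂ n, x⟫ : ℝ) : EReal) + G₂ x)
    (hv₂rec : ∀ n : ℕ, v₂ (n + 1) = v₂ n + (2 : ℝ) • (u (n + 1) - uh n))
    -- initial condition
    (hinit : u 0 = (1 / 2 : ℝ) • (v₁ 0 + v₂ 0)) :
    (∀ n : ℕ, u n = (1 / 2 : ℝ) • (v₁ n + v₂ n)) ∧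
      ∀ n : ℕ,
        uh n = prox₁ ((2 : ℝ) • u n - v₁ n) ∧
        u (n + 1) = prox₂ ((2 : ℝ) • uh n - ((2 : ℝ) • u n - v₁ n)) ∧
        (2 : ℝ) • u (n + 1) - v₁ (n + 1) =
          (2 : ℝ) • prox₂ ((2 : ℝ) • prox₁ ((2 : ℝ) • u n - v₁ n) -
              ((2 : ℝ) • u n - v₁ n)) -
            ((2 : ℝ) • prox₁ ((2 : ℝ) • u n - v₁ n) - ((2 : ℝ) • u n - v₁ n)) := by
  have hmid := midpoint_invariant hv₁rec hv₂rec hinit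
  refine ⟨hmid, fun n => ?_⟩
  have hv : (2 : ℝ) • u n - v₁ n = v₂ n := by rw [hmid n]; module
  have huh : uh n = prox₁ ((2 : ℝ) • u n - v₁ n) :=
    (hprox₁ _).2 _ (prox_objective_le_of_linearized_objective_le G₁ (huhmin n))
  have hu : u (n + 1) = prox₂ ((2 : ℝ) • uh n - ((2 : ℝ) • u n - v₁ n)) := by
    rw [hv]
    exact (hprox₂ _).2 _ (prox_objective_le_of_linearized_objective_le G₂ (humin n))
  refine ⟨huh, hu, ?_⟩
  rw [← huh, ← hu, hv₁rec]
  module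

/-- For two convex functions (`F(u) = ‖u‖²`, `J = 2`, `B_j = I`), the
generalized Peaceman–Rachford splitting algorithm reduces to the classical Peaceman–Rachford
splitting for `Ḡ₁ + Ḡ₂`, where `Ḡⱼ(u) = Gⱼ(u) + ½‖u‖²`: if `u⁽⁰⁾ = ½(v₁⁽⁰⁾ + v₂⁽⁰⁾)`,
then `u⁽ⁿ⁾ = ½(v₁⁽ⁿ⁾ + v₂⁽ⁿ⁾)` for all `n ≥ 0`, and the sequence `v⁽ⁿ⁾ = 2u⁽ⁿ⁾ − v₁⁽ⁿ⁾`
satisfies `u⁽ⁿ⁺¹ᐟ²⁾ = prox_{Ḡ₁}(v⁽ⁿ⁾)`, `u⁽ⁿ⁺¹⁾ = prox_{Ḡ₂}(2u⁽ⁿ⁺¹ᐟ²⁾ − v⁽ⁿ⁾)` and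
`v⁽ⁿ⁺¹⁾ = (2 prox_{Ḡ₂} − I)(2 prox_{Ḡ₁} − I)(v⁽ⁿ⁾)`.
Here `prox₁, prox₂` are the proximal operators of `Ḡ₁, Ḡ₂`, characterized as unique
minimizers, and `uh n` denotes `u⁽ⁿ⁺¹ᐟ²⁾`. -/
theorem generalized_pr_two_blocks_is_classical_pr
    {V : Type*} [NormedAddCommGroup V] [InnerProductSpace ℝ V] [FiniteDimensional ℝ V]
    (G₁ G₂ : V → EReal)
    (hG₁ : ProperFn G₁ ∧ ConvexFn G₁ ∧ LowerSemicontinuous G₁)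
    (hG₂ : ProperFn G₂ ∧ ConvexFn G₂ ∧ LowerSemicontinuous G₂)
    -- the proximal operators of `Ḡ₁` and `Ḡ₂`
    (prox₁ prox₂ : V → V)
    (hprox₁ : ∀ z : V,
      (∀ x : V, ((1 / 2 * ‖prox₁ z - z‖ ^ 2 + 1 / 2 * ‖prox₁ z‖ ^ 2 : ℝ) : EReal) +
          G₁ (prox₁ z) ≤
        ((1 / 2 * ‖x - z‖ ^ 2 + 1 / 2 * ‖x‖ ^ 2 : ℝ) : EReal) + G₁ x) ∧
      ∀ y : V, (∀ x : V, ((1 / 2 * ‖y - z‖ ^ 2 + 1 / 2 * ‖y‖ ^ 2 : ℝ) : EReal) + G₁ y ≤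
          ((1 / 2 * ‖x - z‖ ^ 2 + 1 / 2 * ‖x‖ ^ 2 : ℝ) : EReal) + G₁ x) → y = prox₁ z)
    (hprox₂ : ∀ z : V,
      (∀ x : V, ((1 / 2 * ‖prox₂ z - z‖ ^ 2 + 1 / 2 * ‖prox₂ z‖ ^ 2 : ℝ) : EReal) +
          G₂ (prox₂ z) ≤
        ((1 / 2 * ‖x - z‖ ^ 2 + 1 / 2 * ‖x‖ ^ 2 : ℝ) : EReal) + G₂ x) ∧
      ∀ y : V, (∀ x : V, ((1 / 2 * ‖y - z‖ ^ 2 + 1 / 2 * ‖y‖ ^ 2 : ℝ) : EReal) + G₂ y ≤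
          ((1 / 2 * ‖x - z‖ ^ 2 + 1 / 2 * ‖x‖ ^ 2 : ℝ) : EReal) + G₂ x) → y = prox₂ z)
    -- generalized Peaceman–Rachford iterates: `uh n` is `u⁽ⁿ⁺¹ᐟ²⁾`
    (u uh v₁ v₂ : ℕ → V)
    (huhmin : ∀ n : ℕ, ∀ x : V,
      ((‖uh n - u n‖ ^ 2 + ⟪v₁ n, uh n⟫ : ℝ) : EReal) + G₁ (uh n) ≤
        ((‖x - u n‖ ^ 2 + ⟪v₁ n, x⟫ : ℝ) : EReal) + G₁ x)
    (hv₁rec : ∀ n : ℕ, v₁ (n + 1) = v₁ n + (2 : ℝ) • (uh n - u n))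
    (humin : ∀ n : ℕ, ∀ x : V,
      ((‖u (n + 1) - uh n‖ ^ 2 + ⟪v₂ n, u (n + 1)⟫ : ℝ) : EReal) + G₂ (u (n + 1)) ≤
        ((‖x - uh n‖ ^ 2 + ⟪v₂ n, x⟫ : ℝ) : EReal) + G₂ x)
    (hv₂rec : ∀ n : ℕ, v₂ (n + 1) = v₂ n + (2 : ℝ) • (u (n + 1) - uh n))
    -- initial condition
    (hinit : u 0 = (1 / 2 : ℝ) • (v₁ 0 + v₂ 0)) :
    (∀ n : ℕ, u n = (1 / 2 : ℝ) • (v₁ n + v₂ n)) ∧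
      ∀ n : ℕ,
        uh n = prox₁ ((2 : ℝ) • u n - v₁ n) ∧
        u (n + 1) = prox₂ ((2 : ℝ) • uh n - ((2 : ℝ) • u n - v₁ n)) ∧
        (2 : ℝ) • u (n + 1) - v₁ (n + 1) =
          (2 : ℝ) • prox₂ ((2 : ℝ) • prox₁ ((2 : ℝ) • u n - v₁ n) -
              ((2 : ℝ) • u n - v₁ n)) -
            ((2 : ℝ) • prox₁ ((2 : ℝ) • u n - v₁ n) - ((2 : ℝ) • u n - v₁ n)) :=
  generalized_pr_two_blocks_is_classical_pr_general G₁ G₂ prox₁ prox₂ hprox₁ hprox₂ u uh v₁ v₂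
    huhmin hv₁rec humin hv₂rec hinit
end
end

section
/- If u^{(0)} = ½(v₁^{(0)} + v₂^{(0)}), then the sequence {v₂^{(n)}} generated by the generalized Douglas–Rachford algorithm for two convex functions obeys the classical Douglas–Rachford recursion: v₂^{(n+1)} = (1 − τ)v₂^{(n)} + τ(2 prox_{Ḡ₂} − I)(2 prox_{Ḡ₁} − I)(v₂^{(n)}) for all n ≥ 0; that is, the generalized Douglas–Rachford splitting algorithm reduces to the classical Douglas–Rachford splitting for Ḡ₁ + Ḡ₂. -/
open scoped RealInnerProductSpace

noncomputable section

/-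
The two sub-steps of the generalized scheme are proximal steps in disguise: completing the square,
`‖x - a‖² + ⟪v, x⟫` and `½‖x - (2a - v)‖² + ½‖x‖²` differ by a constant, so they have the same
minimizers once `G` is added. As long as `u⁽ⁿ⁾ = ½(v₁⁽ⁿ⁾ + v₂⁽ⁿ⁾)`, i.e. `2u⁽ⁿ⁾ - v₁⁽ⁿ⁾ = v₂⁽ⁿ⁾`,
this identifies `û⁽ⁿ⁺¹'¹⁾ = prox_{Ḡ₁}(v₂⁽ⁿ⁾)` and `û⁽ⁿ⁺¹'²⁾ = prox_{Ḡ₂}(2û⁽ⁿ⁺¹'¹⁾ - v₂⁽ⁿ⁾)`, and the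
update of `v₂` becomes the Douglas–Rachford step.
-/

lemma forall_le_add_of_eq_add_const {α : Type*} {φ ψ : α → ℝ} {G : α → EReal} (c : ℝ)
    (hφψ : ∀ x, φ x = ψ x + c) {y : α}
    (hy : ∀ x, (ψ y : EReal) + G y ≤ (ψ x : EReal) + G x) :
    ∀ x, (φ y : EReal) + G y ≤ (φ x : EReal) + G x := by
  intro x
  calc (φ y : EReal) + G y = ((ψ y : EReal) + G y) + c := by
        rw [hφψ, EReal.coe_add]; abel
    _ ≤ ((ψ x : EReal) + G x) + c := add_le_add_left (hy x) _
    _ = (φ x : EReal) + G x := by rw [hφψ, EReal.coe_add]; abel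

section ProxStep

variable {V : Type*} [NormedAddCommGroup V] [InnerProductSpace ℝ V]

lemma half_norm_sub_sq_add_half_norm_sq (w a v : V) :
    1 / 2 * ‖w - ((2 : ℝ) • a - v)‖ ^ 2 + 1 / 2 * ‖w‖ ^ 2 =
      ‖w - a‖ ^ 2 + ⟪v, w⟫ + (1 / 2 * ‖(2 : ℝ) • a - v‖ ^ 2 - ‖a‖ ^ 2) := by
  simp only [norm_sub_sq_real, inner_sub_right, real_inner_smul_right, real_inner_comm v w]
  ring

lemma eq_prox_of_forall_le {G : V → EReal} {p a v z y : V} (hz : z = (2 : ℝ) • a - v)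
    (hp : ∀ y : V, (∀ x : V, ((1 / 2 * ‖y - z‖ ^ 2 + 1 / 2 * ‖y‖ ^ 2 : ℝ) : EReal) + G y ≤
      ((1 / 2 * ‖x - z‖ ^ 2 + 1 / 2 * ‖x‖ ^ 2 : ℝ) : EReal) + G x) → y = p)
    (hy : ∀ x : V, ((‖y - a‖ ^ 2 + ⟪v, y⟫ : ℝ) : EReal) + G y ≤
      ((‖x - a‖ ^ 2 + ⟪v, x⟫ : ℝ) : EReal) + G x) :
    y = p := by
  subst hz
  exact hp y (forall_le_add_of_eq_add_const _ (fun w => half_norm_sub_sq_add_half_norm_sq w a v) hy)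

end ProxStep

theorem generalized_dr_two_blocks_is_classical_dr_general
    {V : Type*} [NormedAddCommGroup V] [InnerProductSpace ℝ V]
    (G₁ G₂ : V → EReal)
    (τ : ℝ)
    -- the proximal operators of `Ḡ₁` and `Ḡ₂`
    (prox₁ prox₂ : V → V)
    (hprox₁ : ∀ z : V,
      (∀ x : V, ((1 / 2 * ‖prox₁ z - z‖ ^ 2 + 1 / 2 * ‖prox₁ z‖ ^ 2 : ℝ) : EReal) +
          G₁ (prox₁ z) ≤
        ((1 / 2 * ‖x - z‖ ^ 2 + 1 / 2 * ‖x‖ ^ 2 : ℝ) : EReal) + G₁ x) ∧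
      ∀ y : V, (∀ x : V, ((1 / 2 * ‖y - z‖ ^ 2 + 1 / 2 * ‖y‖ ^ 2 : ℝ) : EReal) + G₁ y ≤
          ((1 / 2 * ‖x - z‖ ^ 2 + 1 / 2 * ‖x‖ ^ 2 : ℝ) : EReal) + G₁ x) → y = prox₁ z)
    (hprox₂ : ∀ z : V,
      (∀ x : V, ((1 / 2 * ‖prox₂ z - z‖ ^ 2 + 1 / 2 * ‖prox₂ z‖ ^ 2 : ℝ) : EReal) +
          G₂ (prox₂ z) ≤
        ((1 / 2 * ‖x - z‖ ^ 2 + 1 / 2 * ‖x‖ ^ 2 : ℝ) : EReal) + G₂ x) ∧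
      ∀ y : V, (∀ x : V, ((1 / 2 * ‖y - z‖ ^ 2 + 1 / 2 * ‖y‖ ^ 2 : ℝ) : EReal) + G₂ y ≤
          ((1 / 2 * ‖x - z‖ ^ 2 + 1 / 2 * ‖x‖ ^ 2 : ℝ) : EReal) + G₂ x) → y = prox₂ z)
    -- generalized Douglas–Rachford iterates: `uh (n+1) j` is `û⁽ⁿ⁺¹'ʲ⁾`, `j = 0, 1, 2`
    (u : ℕ → V) (uh : ℕ → ℕ → V) (v₁ v₂ : ℕ → V)
    (huh0 : ∀ n : ℕ, uh (n + 1) 0 = u n)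
    (huh1min : ∀ n : ℕ, ∀ x : V,
      ((‖uh (n + 1) 1 - uh (n + 1) 0‖ ^ 2 + ⟪v₁ n, uh (n + 1) 1⟫ : ℝ) : EReal) +
          G₁ (uh (n + 1) 1) ≤
        ((‖x - uh (n + 1) 0‖ ^ 2 + ⟪v₁ n, x⟫ : ℝ) : EReal) + G₁ x)
    (huh2min : ∀ n : ℕ, ∀ x : V,
      ((‖uh (n + 1) 2 - uh (n + 1) 1‖ ^ 2 + ⟪v₂ n, uh (n + 1) 2⟫ : ℝ) : EReal) +
          G₂ (uh (n + 1) 2) ≤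
        ((‖x - uh (n + 1) 1‖ ^ 2 + ⟪v₂ n, x⟫ : ℝ) : EReal) + G₂ x)
    (hv₂rec : ∀ n : ℕ, v₂ (n + 1) = v₂ n + (2 * τ) • (uh (n + 1) 2 - uh (n + 1) 1))
    (hurec : ∀ n : ℕ, u (n + 1) = (1 / 2 : ℝ) • (v₁ (n + 1) + v₂ (n + 1)))
    -- initial condition
    (hinit : u 0 = (1 / 2 : ℝ) • (v₁ 0 + v₂ 0)) :
    ∀ n : ℕ, v₂ (n + 1) = (1 - τ) • v₂ n +
      τ • ((2 : ℝ) • prox₂ ((2 : ℝ) • prox₁ (v₂ n) - v₂ n) -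
        ((2 : ℝ) • prox₁ (v₂ n) - v₂ n)) := by
  have hu : ∀ n : ℕ, u n = (1 / 2 : ℝ) • (v₁ n + v₂ n) := by
    rintro (_ | n)
    exacts [hinit, hurec n]
  intro n
  have h₁ : uh (n + 1) 1 = prox₁ (v₂ n) :=
    eq_prox_of_forall_le (by rw [huh0, hu]; module) (hprox₁ (v₂ n)).2 (huh1min n)
  have h₂ : uh (n + 1) 2 = prox₂ ((2 : ℝ) • prox₁ (v₂ n) - v₂ n) :=
    eq_prox_of_forall_le (by rw [h₁]) (hprox₂ _).2 (huh2min n)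
  rw [hv₂rec, h₁, h₂]
  module

/-- For two convex functions (`F(u) = ‖u‖²`, `J = 2`, `B_j = I`), the
generalized Douglas–Rachford splitting algorithm reduces to the classical Douglas–Rachford
splitting for `Ḡ₁ + Ḡ₂`, where `Ḡⱼ(u) = Gⱼ(u) + ½‖u‖²`: if `u⁽⁰⁾ = ½(v₁⁽⁰⁾ + v₂⁽⁰⁾)`,
then `v₂⁽ⁿ⁺¹⁾ = (1 − τ)v₂⁽ⁿ⁾ + τ(2 prox_{Ḡ₂} − I)(2 prox_{Ḡ₁} − I)(v₂⁽ⁿ⁾)` for all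
`n ≥ 0`. Here `prox₁, prox₂` are the proximal operators of `Ḡ₁, Ḡ₂`, characterized as
unique minimizers, and `uh (n+1) j` denotes `û⁽ⁿ⁺¹'ʲ⁾` for `j = 0, 1, 2`. -/
theorem generalized_dr_two_blocks_is_classical_dr
    {V : Type*} [NormedAddCommGroup V] [InnerProductSpace ℝ V] [FiniteDimensional ℝ V]
    (G₁ G₂ : V → EReal)
    (hG₁ : ProperFn G₁ ∧ ConvexFn G₁ ∧ LowerSemicontinuous G₁)
    (hG₂ : ProperFn G₂ ∧ ConvexFn G₂ ∧ LowerSemicontinuous G₂)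
    (τ : ℝ) (hτ : 0 < τ)
    -- the proximal operators of `Ḡ₁` and `Ḡ₂`
    (prox₁ prox₂ : V → V)
    (hprox₁ : ∀ z : V,
      (∀ x : V, ((1 / 2 * ‖prox₁ z - z‖ ^ 2 + 1 / 2 * ‖prox₁ z‖ ^ 2 : ℝ) : EReal) +
          G₁ (prox₁ z) ≤
        ((1 / 2 * ‖x - z‖ ^ 2 + 1 / 2 * ‖x‖ ^ 2 : ℝ) : EReal) + G₁ x) ∧
      ∀ y : V, (∀ x : V, ((1 / 2 * ‖y - z‖ ^ 2 + 1 / 2 * ‖y‖ ^ 2 : ℝ) : EReal) + G₁ y ≤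
          ((1 / 2 * ‖x - z‖ ^ 2 + 1 / 2 * ‖x‖ ^ 2 : ℝ) : EReal) + G₁ x) → y = prox₁ z)
    (hprox₂ : ∀ z : V,
      (∀ x : V, ((1 / 2 * ‖prox₂ z - z‖ ^ 2 + 1 / 2 * ‖prox₂ z‖ ^ 2 : ℝ) : EReal) +
          G₂ (prox₂ z) ≤
        ((1 / 2 * ‖x - z‖ ^ 2 + 1 / 2 * ‖x‖ ^ 2 : ℝ) : EReal) + G₂ x) ∧
      ∀ y : V, (∀ x : V, ((1 / 2 * ‖y - z‖ ^ 2 + 1 / 2 * ‖y‖ ^ 2 : ℝ) : EReal) + G₂ y ≤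
          ((1 / 2 * ‖x - z‖ ^ 2 + 1 / 2 * ‖x‖ ^ 2 : ℝ) : EReal) + G₂ x) → y = prox₂ z)
    -- generalized Douglas–Rachford iterates: `uh (n+1) j` is `û⁽ⁿ⁺¹'ʲ⁾`, `j = 0, 1, 2`
    (u : ℕ → V) (uh : ℕ → ℕ → V) (v₁ v₂ : ℕ → V)
    (huh0 : ∀ n : ℕ, uh (n + 1) 0 = u n)
    (huh1min : ∀ n : ℕ, ∀ x : V,
      ((‖uh (n + 1) 1 - uh (n + 1) 0‖ ^ 2 + ⟪v₁ n, uh (n + 1) 1⟫ : ℝ) : EReal) +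
          G₁ (uh (n + 1) 1) ≤
        ((‖x - uh (n + 1) 0‖ ^ 2 + ⟪v₁ n, x⟫ : ℝ) : EReal) + G₁ x)
    (huh2min : ∀ n : ℕ, ∀ x : V,
      ((‖uh (n + 1) 2 - uh (n + 1) 1‖ ^ 2 + ⟪v₂ n, uh (n + 1) 2⟫ : ℝ) : EReal) +
          G₂ (uh (n + 1) 2) ≤
        ((‖x - uh (n + 1) 1‖ ^ 2 + ⟪v₂ n, x⟫ : ℝ) : EReal) + G₂ x)
    (hv₁rec : ∀ n : ℕ, v₁ (n + 1) = v₁ n + (2 * τ) • (uh (n + 1) 1 - uh (n + 1) 0))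
    (hv₂rec : ∀ n : ℕ, v₂ (n + 1) = v₂ n + (2 * τ) • (uh (n + 1) 2 - uh (n + 1) 1))
    (hurec : ∀ n : ℕ, u (n + 1) = (1 / 2 : ℝ) • (v₁ (n + 1) + v₂ (n + 1)))
    -- initial condition
    (hinit : u 0 = (1 / 2 : ℝ) • (v₁ 0 + v₂ 0)) :
    ∀ n : ℕ, v₂ (n + 1) = (1 - τ) • v₂ n +
      τ • ((2 : ℝ) • prox₂ ((2 : ℝ) • prox₁ (v₂ n) - v₂ n) -
        ((2 : ℝ) • prox₁ (v₂ n) - v₂ n)) :=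
  generalized_dr_two_blocks_is_classical_dr_general G₁ G₂ τ prox₁ prox₂ hprox₁ hprox₂ u uh v₁ v₂
    huh0 huh1min huh2min hv₂rec hurec hinit
end
end
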